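/- arXiv:1810.04766 — 7 statements merged into one kernel-verified Lean document; each statement's English description precedes it below -/
import Mathlib

section
/- Let r, s ∈ (0,1) be arbitrary and let m = (1/2, (r+s)/2) denote the midpoint of the segment joining (0,s) and (1,r). Then every interior angle of each of the following eight triangles is at most 144° (i.e. at most 4π/5 radians): T1 with vertices (0,0), (1/2,0), m; T2 with vertices (1/2,0), (1,0), m; T3 with vertices (1,0), (1,r), m; T4 with vertices (0,s), (0,0), m; T5 with vertices (1,r), (1,1), m; T6 with vertices (1,1), (1/2,1), m; T7 with vertices (1/2,1), (0,1), m; T8 with vertices (0,1), (0,s), m. In particular the bound 144° is independent of r and s. -/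
open Real EuclideanGeometry

/-- The point `(a, b)` in the Euclidean plane. -/
noncomputable def pt (a b : ℝ) : EuclideanSpace ℝ (Fin 2) := WithLp.toLp 2 ![a, b]

lemma key0 (I A B : ℝ) (hA : 0 ≤ A) (hB : 0 ≤ B) (h : I < 0 → 2 * I ^ 2 ≤ A * B) :
    Real.arccos (I / (Real.sqrt A * Real.sqrt B)) ≤ 4 * π / 5 := by
  have hs2 : (0:ℝ) ≤ Real.sqrt 2 := Real.sqrt_nonneg 2
  have hs2' : Real.sqrt 2 ^ 2 = 2 := Real.sq_sqrt (by norm_num)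
  have ht : -(Real.sqrt 2 / 2) ≤ I / (Real.sqrt A * Real.sqrt B) := by
    rcases eq_or_lt_of_le (mul_nonneg (Real.sqrt_nonneg A) (Real.sqrt_nonneg B)) with hP | hP
    · rw [← hP, div_zero]; linarith
    · rcases le_or_gt 0 I with hI | hI
      · have : 0 ≤ I / (Real.sqrt A * Real.sqrt B) := div_nonneg hI (le_of_lt hP)
        linarith
      · rw [le_div_iff₀ hP]
        have h2 : 2 * I ^ 2 ≤ A * B := h hI
        have hAB : (Real.sqrt A * Real.sqrt B) ^ 2 = A * B := by
          rw [mul_pow, Real.sq_sqrt hA, Real.sq_sqrt hB]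
        nlinarith [sq_nonneg (Real.sqrt 2 * I + Real.sqrt A * Real.sqrt B), mul_pos (show (0:ℝ) < Real.sqrt 2 by positivity) hP]
  have harcsin : Real.arcsin (-(Real.sqrt 2 / 2)) = -(π/4) := by
    rw [show -(Real.sqrt 2 / 2) = Real.sin (-(π/4)) by
      rw [Real.sin_neg, Real.sin_pi_div_four]]
    exact Real.arcsin_sin (by linarith [pi_pos]) (by linarith [pi_pos])
  have := Real.monotone_arcsin ht
  rw [harcsin] at this
  rw [Real.arccos_eq_pi_div_two_sub_arcsin]
  linarith [pi_pos]

lemma key (a b c d e f : ℝ)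
    (h : (a-c)*(e-c)+(b-d)*(f-d) < 0 →
      2*((a-c)*(e-c)+(b-d)*(f-d))^2 ≤ ((a-c)^2+(b-d)^2)*((e-c)^2+(f-d)^2)) :
    EuclideanGeometry.angle (pt a b) (pt c d) (pt e f) ≤ 4 * π / 5 := by
  have h1 : EuclideanGeometry.angle (pt a b) (pt c d) (pt e f)
      = InnerProductGeometry.angle (pt a b - pt c d) (pt e f - pt c d) := rfl
  rw [h1, InnerProductGeometry.angle]
  have hI : (inner ℝ (pt a b - pt c d) (pt e f - pt c d) : ℝ) = (a-c)*(e-c)+(b-d)*(f-d) := by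
    simp [pt, PiLp.inner_apply, Fin.sum_univ_two, mul_comm]
  have hA : ‖pt a b - pt c d‖ = Real.sqrt ((a-c)^2+(b-d)^2) := by
    rw [EuclideanSpace.norm_eq]
    congr 1
    simp [pt, Fin.sum_univ_two, sq_abs]
  have hB : ‖pt e f - pt c d‖ = Real.sqrt ((e-c)^2+(f-d)^2) := by
    rw [EuclideanSpace.norm_eq]
    congr 1
    simp [pt, Fin.sum_univ_two, sq_abs]
  rw [hI, hA, hB]
  exact key0 _ _ _ (by positivity) (by positivity) h

/-- In the type-A configuration of the locally modified finite element method,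
all interior angles of the eight sub-triangles of the reference patch are bounded
by `144° = 4π/5`, independently of the cut parameters `r, s ∈ (0,1)`. -/
theorem stmt_0 (r s : ℝ) (hr : r ∈ Set.Ioo (0 : ℝ) 1) (hs : s ∈ Set.Ioo (0 : ℝ) 1) :
    ∀ T ∈ ([(pt 0 0, pt (1/2) 0, pt (1/2) ((r+s)/2)),
            (pt (1/2) 0, pt 1 0, pt (1/2) ((r+s)/2)),
            (pt 1 0, pt 1 r, pt (1/2) ((r+s)/2)),
            (pt 0 s, pt 0 0, pt (1/2) ((r+s)/2)),
            (pt 1 r, pt 1 1, pt (1/2) ((r+s)/2)),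
            (pt 1 1, pt (1/2) 1, pt (1/2) ((r+s)/2)),
            (pt (1/2) 1, pt 0 1, pt (1/2) ((r+s)/2)),
            (pt 0 1, pt 0 s, pt (1/2) ((r+s)/2))] :
          List (EuclideanSpace ℝ (Fin 2) × EuclideanSpace ℝ (Fin 2) ×
            EuclideanSpace ℝ (Fin 2))),
      EuclideanGeometry.angle T.2.1 T.1 T.2.2 ≤ 4 * π / 5 ∧
      EuclideanGeometry.angle T.1 T.2.1 T.2.2 ≤ 4 * π / 5 ∧
      EuclideanGeometry.angle T.1 T.2.2 T.2.1 ≤ 4 * π / 5 := by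
  obtain ⟨hr0, hr1⟩ := hr
  obtain ⟨hs0, hs1⟩ := hs
  have hA : (0:ℝ) < 1 - r + s := by linarith
  have hB : (0:ℝ) < 1 + r - s := by linarith
  have h1r : (0:ℝ) < 1 - r := by linarith
  have h1s : (0:ℝ) < 1 - s := by linarith
  intro T hT
  simp only [List.mem_cons, List.not_mem_nil, or_false] at hT
  rcases hT with rfl | rfl | rfl | rfl | rfl | rfl | rfl | rfl
  -- T1
  · exact ⟨key _ _ _ _ _ _ (fun h => by exfalso; linarith),
      key _ _ _ _ _ _ (fun h => by exfalso; linarith),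
      key _ _ _ _ _ _ (fun h => by exfalso; nlinarith [sq_nonneg (r+s)])⟩
  -- T2
  · exact ⟨key _ _ _ _ _ _ (fun h => by exfalso; linarith),
      key _ _ _ _ _ _ (fun h => by exfalso; linarith),
      key _ _ _ _ _ _ (fun h => by exfalso; nlinarith [sq_nonneg (r+s)])⟩
  -- T3
  · exact ⟨key _ _ _ _ _ _ (fun h => by
        exfalso; nlinarith [mul_pos hr0 (add_pos hs0 hr0)]),
      key _ _ _ _ _ _ (fun h => by
        nlinarith [mul_pos (mul_pos hr0 hr0) (mul_pos hA hB)]),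
      key _ _ _ _ _ _ (fun h => by
        exfalso; nlinarith [sq_nonneg s, mul_pos h1r (show (0:ℝ) < 1 + r by linarith)])⟩
  -- T4
  · exact ⟨key _ _ _ _ _ _ (fun h => by
        nlinarith [mul_pos (mul_pos hs0 hs0) (mul_pos hA hB)]),
      key _ _ _ _ _ _ (fun h => by
        exfalso; nlinarith [mul_pos hs0 (add_pos hs0 hr0)]),
      key _ _ _ _ _ _ (fun h => by
        exfalso; nlinarith [sq_nonneg r, mul_pos h1s (show (0:ℝ) < 1 + s by linarith)])⟩
  -- T5
  · exact ⟨key _ _ _ _ _ _ (fun h => by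
        nlinarith [mul_pos (mul_pos h1r h1r) (mul_pos hA hB)]),
      key _ _ _ _ _ _ (fun h => by
        exfalso; nlinarith [mul_pos h1r (show (0:ℝ) < 2 - r - s by linarith)]),
      key _ _ _ _ _ _ (fun h => by
        exfalso; nlinarith [sq_nonneg (1-s), mul_pos hr0 (show (0:ℝ) < 2 - r by linarith)])⟩
  -- T6
  · exact ⟨key _ _ _ _ _ _ (fun h => by exfalso; linarith),
      key _ _ _ _ _ _ (fun h => by exfalso; linarith),
      key _ _ _ _ _ _ (fun h => by exfalso; nlinarith [sq_nonneg (2-r-s)])⟩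
  -- T7
  · exact ⟨key _ _ _ _ _ _ (fun h => by exfalso; linarith),
      key _ _ _ _ _ _ (fun h => by exfalso; linarith),
      key _ _ _ _ _ _ (fun h => by exfalso; nlinarith [sq_nonneg (2-r-s)])⟩
  -- T8
  · exact ⟨key _ _ _ _ _ _ (fun h => by
        exfalso; nlinarith [mul_pos h1s (show (0:ℝ) < 2 - r - s by linarith)]),
      key _ _ _ _ _ _ (fun h => by
        nlinarith [mul_pos (mul_pos h1s h1s) (mul_pos hA hB)]),
      key _ _ _ _ _ _ (fun h => by
        exfalso; nlinarith [sq_nonneg (1-r), mul_pos hs0 (show (0:ℝ) < 2 - s by linarith)])⟩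
end

section
/- Let p be a real polynomial in two variables X, Y whose degree in X is at most 3 and whose degree in Y is at most 3. If the gradient of p vanishes at every point of the boundary of the unit square, i.e. ∂p/∂X(x,y) = 0 and ∂p/∂Y(x,y) = 0 for every (x,y) ∈ ∂([0,1]²), then p is a constant polynomial. -/
open MvPolynomial

noncomputable def Saux (A : ℕ → ℕ → ℝ) : MvPolynomial (Fin 2) ℝ :=
  ∑ i ∈ Finset.range 4, ∑ j ∈ Finset.range 4, C (A i j) * X 0 ^ i * X 1 ^ j

theorem rep_aux (p : MvPolynomial (Fin 2) ℝ) (hdX : p.degreeOf 0 ≤ 3) (hdY : p.degreeOf 1 ≤ 3) :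
    p = Saux (fun i j => coeff (Finsupp.single 0 i + Finsupp.single 1 j) p) := by
  unfold Saux
  have key : ∀ (i j : ℕ) (c : ℝ),
      (monomial (Finsupp.single 0 i + Finsupp.single 1 j) c : MvPolynomial (Fin 2) ℝ)
        = C c * X 0 ^ i * X 1 ^ j := by
    intro i j c
    rw [X_pow_eq_monomial, X_pow_eq_monomial, C_apply, monomial_mul, monomial_mul]
    simp
  have hz : ∀ m : Fin 2 →₀ ℕ, (3 < m 0 ∨ 3 < m 1) → coeff m p = 0 := by
    intro m h
    by_contra hc
    have hm : m ∈ p.support := by simpa [MvPolynomial.mem_support_iff] using hc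
    rcases h with h | h
    · have := (degreeOf_lt_iff (by norm_num : (0:ℕ) < 4)).mp (lt_of_le_of_lt hdX (by norm_num)) m hm
      omega
    · have := (degreeOf_lt_iff (by norm_num : (0:ℕ) < 4)).mp (lt_of_le_of_lt hdY (by norm_num)) m hm
      omega
  have hme : ∀ m : Fin 2 →₀ ℕ, (Finsupp.single 0 (m 0) + Finsupp.single 1 (m 1) : Fin 2 →₀ ℕ) = m := by
    intro m; ext x; fin_cases x <;> simp
  ext m
  simp only [← key, MvPolynomial.coeff_sum, coeff_monomial]
  by_cases h0 : m 0 ≤ 3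
  · by_cases h1 : m 1 ≤ 3
    · rw [Finset.sum_eq_single (m 0)]
      · rw [Finset.sum_eq_single (m 1)]
        · rw [if_pos (hme m), hme m]
        · intro j hj hne
          rw [if_neg]
          intro he
          apply hne
          have := congrArg (fun f : Fin 2 →₀ ℕ => f 1) he
          simpa using this
        · intro h; exact absurd (Finset.mem_range.mpr (by omega)) h
      · intro i hi hne
        apply Finset.sum_eq_zero
        intro j hj
        rw [if_neg]
        intro he
        apply hne
        have := congrArg (fun f : Fin 2 →₀ ℕ => f 0) he
        simpa using this
      · intro h; exact absurd (Finset.mem_range.mpr (by omega)) h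
    · rw [hz m (Or.inr (by omega))]
      symm
      apply Finset.sum_eq_zero; intro i hi
      apply Finset.sum_eq_zero; intro j hj
      rw [if_neg]
      intro he
      have := congrArg (fun f : Fin 2 →₀ ℕ => f 1) he
      simp at this
      simp at hj
      omega
  · rw [hz m (Or.inl (by omega))]
    symm
    apply Finset.sum_eq_zero; intro i hi
    apply Finset.sum_eq_zero; intro j hj
    rw [if_neg]
    intro he
    have := congrArg (fun f : Fin 2 →₀ ℕ => f 0) he
    simp at this
    simp at hi
    omega

theorem evalDX (A : ℕ → ℕ → ℝ) (x y : ℝ) :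
    eval ![x, y] (pderiv 0 (Saux A)) =
    A 1 0 + A 1 1 * y + A 1 2 * y^2 + A 1 3 * y^3
    + 2*A 2 0*x + 2*A 2 1*x*y + 2*A 2 2*x*y^2 + 2*A 2 3*x*y^3
    + 3*A 3 0*x^2 + 3*A 3 1*x^2*y + 3*A 3 2*x^2*y^2 + 3*A 3 3*x^2*y^3 := by
  simp [Saux, Finset.sum_range_succ, pderiv_mul, pderiv_C, pderiv_X_self, pderiv_X_of_ne,
    Derivation.leibniz_pow, smul_eq_mul]
  ring

theorem evalDY (A : ℕ → ℕ → ℝ) (x y : ℝ) :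
    eval ![x, y] (pderiv 1 (Saux A)) =
    A 0 1 + 2*A 0 2*y + 3*A 0 3*y^2
    + A 1 1*x + 2*A 1 2*x*y + 3*A 1 3*x*y^2
    + A 2 1*x^2 + 2*A 2 2*x^2*y + 3*A 2 3*x^2*y^2
    + A 3 1*x^3 + 2*A 3 2*x^3*y + 3*A 3 3*x^3*y^2 := by
  simp [Saux, Finset.sum_range_succ, pderiv_mul, pderiv_C, pderiv_X_self, pderiv_X_of_ne,
    Derivation.leibniz_pow, smul_eq_mul]
  ring

set_option maxHeartbeats 2000000 in
/-- A `Q₃` polynomial (partial degree ≤ 3 in each variable) whose gradient vanishes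
on the boundary of the unit square is constant. -/
theorem stmt_1 (p : MvPolynomial (Fin 2) ℝ)
    (hdX : p.degreeOf 0 ≤ 3) (hdY : p.degreeOf 1 ≤ 3)
    (hgrad : ∀ x y : ℝ, x ∈ Set.Icc (0 : ℝ) 1 → y ∈ Set.Icc (0 : ℝ) 1 →
      (x = 0 ∨ x = 1 ∨ y = 0 ∨ y = 1) →
      eval ![x, y] (pderiv 0 p) = 0 ∧ eval ![x, y] (pderiv 1 p) = 0) :
    ∃ c : ℝ, p = C c := by
  obtain ⟨A, hp⟩ : ∃ A : ℕ → ℕ → ℝ, p = Saux A := ⟨_, rep_aux p hdX hdY⟩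
  subst hp
  have g1 := hgrad 0 0 (by norm_num) (by norm_num) (by norm_num)
  have g2 := hgrad (1/3) 0 (by norm_num) (by norm_num) (by norm_num)
  have g3 := hgrad (1/2) 0 (by norm_num) (by norm_num) (by norm_num)
  have g4 := hgrad 1 0 (by norm_num) (by norm_num) (by norm_num)
  have g5 := hgrad 0 1 (by norm_num) (by norm_num) (by norm_num)
  have g6 := hgrad (1/3) 1 (by norm_num) (by norm_num) (by norm_num)
  have g7 := hgrad (1/2) 1 (by norm_num) (by norm_num) (by norm_num)
  have g8 := hgrad 1 1 (by norm_num) (by norm_num) (by norm_num)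
  have g9 := hgrad 0 (1/3) (by norm_num) (by norm_num) (by norm_num)
  have g10 := hgrad 0 (1/2) (by norm_num) (by norm_num) (by norm_num)
  have g11 := hgrad 1 (1/3) (by norm_num) (by norm_num) (by norm_num)
  have g12 := hgrad 1 (1/2) (by norm_num) (by norm_num) (by norm_num)
  rw [evalDX, evalDY] at g1 g2 g3 g4 g5 g6 g7 g8 g9 g10 g11 g12
  obtain ⟨a1, b1⟩ := g1
  obtain ⟨a2, b2⟩ := g2
  obtain ⟨a3, b3⟩ := g3
  obtain ⟨a4, b4⟩ := g4
  obtain ⟨a5, b5⟩ := g5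
  obtain ⟨a6, b6⟩ := g6
  obtain ⟨a7, b7⟩ := g7
  obtain ⟨a8, b8⟩ := g8
  obtain ⟨a9, b9⟩ := g9
  obtain ⟨a10, b10⟩ := g10
  obtain ⟨a11, b11⟩ := g11
  obtain ⟨a12, b12⟩ := g12
  norm_num at a1 b1 a2 b2 a3 b3 a4 b4 a5 b5 a6 b6 a7 b7 a8 b8 a9 b9 a10 b10 a11 b11 a12 b12
  have z01 : A 0 1 = 0 := by linarith
  have z11 : A 1 1 = 0 := by linarith
  have z21 : A 2 1 = 0 := by linarith
  have z31 : A 3 1 = 0 := by linarith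
  have z10 : A 1 0 = 0 := by linarith
  have z20 : A 2 0 = 0 := by linarith
  have z30 : A 3 0 = 0 := by linarith
  have z02 : A 0 2 = 0 := by linarith
  have z03 : A 0 3 = 0 := by linarith
  have z12 : A 1 2 = 0 := by linarith
  have z13 : A 1 3 = 0 := by linarith
  have z22 : A 2 2 = 0 := by linarith
  have z23 : A 2 3 = 0 := by linarith
  have z32 : A 3 2 = 0 := by linarith
  have z33 : A 3 3 = 0 := by linarith
  refine ⟨A 0 0, ?_⟩
  simp [Saux, Finset.sum_range_succ, z01, z11, z21, z31, z10, z20, z30, z02, z03, z12, z13,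
    z22, z23, z32, z33]
end

section
/- Let p be a real polynomial in two variables X, Y of total degree at most 5. If the gradient of p vanishes at every point of the boundary of the reference triangle, i.e. ∂p/∂X(x,y) = 0 and ∂p/∂Y(x,y) = 0 for every (x,y) on the three sides of the triangle with vertices (0,0), (1,0), (0,1), then p is a constant polynomial. -/
open MvPolynomial

private lemma quartic_aux (b0 b1 b2 b3 b4 : ℝ)
    (h : ∀ t ∈ Set.Icc (0:ℝ) 1, b0 + b1*t + b2*t^2 + b3*t^3 + b4*t^4 = 0) :
    b0 = 0 ∧ b1 = 0 ∧ b2 = 0 ∧ b3 = 0 ∧ b4 = 0 := by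
  have h0 := h 0 (by norm_num)
  have h1 := h 1 (by norm_num)
  have h2 := h (1/2) (by norm_num)
  have h3 := h (1/4) (by norm_num)
  have h4 := h (3/4) (by norm_num)
  norm_num at h0 h1 h2 h3 h4
  refine ⟨by linarith, by linarith, by linarith, by linarith, by linarith⟩

private lemma fin2_eq (m : Fin 2 →₀ ℕ) :
    m = Finsupp.single 0 (m 0) + Finsupp.single 1 (m 1) := by
  ext a; fin_cases a <;> simp

private lemma pair_eq_iff (i j i' j' : ℕ) :
    (Finsupp.single (0 : Fin 2) i + Finsupp.single 1 j
      = Finsupp.single 0 i' + Finsupp.single 1 j') ↔ i = i' ∧ j = j' := by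
  constructor
  · intro h
    have h0 := DFunLike.congr_fun h 0
    have h1 := DFunLike.congr_fun h 1
    simp [Finsupp.single_apply] at h0 h1
    exact ⟨h0, h1⟩
  · rintro ⟨rfl, rfl⟩; rfl

private lemma coeff_mono (i j i' j' : ℕ) (a : ℝ) :
    coeff (Finsupp.single 0 i + Finsupp.single 1 j)
      (monomial (Finsupp.single 0 i' + Finsupp.single 1 j') a : MvPolynomial (Fin 2) ℝ)
      = if i' = i ∧ j' = j then a else 0 := by
  classical
  simp only [coeff_monomial, pair_eq_iff]

private lemma mono_form (i j : ℕ) (a : ℝ) :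
    (monomial (Finsupp.single 0 i + Finsupp.single 1 j) a : MvPolynomial (Fin 2) ℝ)
      = C a * X 0 ^ i * X 1 ^ j := by
  rw [monomial_eq, Finsupp.prod_fintype _ _ (fun x => pow_zero _), Fin.prod_univ_two]
  simp [Finsupp.single_apply, mul_assoc]

private lemma supsum (d : Fin 2 →₀ ℕ) : ∑ x ∈ d.support, d x = d 0 + d 1 := by
  rw [Finset.sum_subset (Finset.subset_univ _)
    (fun x _ hx => Finsupp.notMem_support_iff.mp hx), Fin.sum_univ_two]

set_option maxHeartbeats 1600000 in
private lemma rep (p : MvPolynomial (Fin 2) ℝ) (hdeg : p.totalDegree ≤ 5) :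
    ∃ c : ℕ → ℕ → ℝ, p = C (c 0 0) * X 0 ^ 0 * X 1 ^ 0 + C (c 0 1) * X 0 ^ 0 * X 1 ^ 1 + C (c 0 2) * X 0 ^ 0 * X 1 ^ 2 + C (c 0 3) * X 0 ^ 0 * X 1 ^ 3 + C (c 0 4) * X 0 ^ 0 * X 1 ^ 4 + C (c 0 5) * X 0 ^ 0 * X 1 ^ 5 + C (c 1 0) * X 0 ^ 1 * X 1 ^ 0 + C (c 1 1) * X 0 ^ 1 * X 1 ^ 1 + C (c 1 2) * X 0 ^ 1 * X 1 ^ 2 + C (c 1 3) * X 0 ^ 1 * X 1 ^ 3 + C (c 1 4) * X 0 ^ 1 * X 1 ^ 4 + C (c 2 0) * X 0 ^ 2 * X 1 ^ 0 + C (c 2 1) * X 0 ^ 2 * X 1 ^ 1 + C (c 2 2) * X 0 ^ 2 * X 1 ^ 2 + C (c 2 3) * X 0 ^ 2 * X 1 ^ 3 + C (c 3 0) * X 0 ^ 3 * X 1 ^ 0 + C (c 3 1) * X 0 ^ 3 * X 1 ^ 1 + C (c 3 2) * X 0 ^ 3 * X 1 ^ 2 + C (c 4 0) * X 0 ^ 4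 * X 1 ^ 0 + C (c 4 1) * X 0 ^ 4 * X 1 ^ 1 + C (c 5 0) * X 0 ^ 5 * X 1 ^ 0 := by
  refine ⟨fun i j => coeff (Finsupp.single 0 i + Finsupp.single 1 j) p, ?_⟩
  simp only [← mono_form]
  refine MvPolynomial.ext _ _ (fun m => ?_)
  rw [fin2_eq m]
  generalize m 0 = i
  generalize m 1 = j
  by_cases h5 : i + j ≤ 5
  · have hi : i ≤ 5 := le_trans (Nat.le_add_right _ _) h5
    have hj : j ≤ 5 := le_trans (Nat.le_add_left _ _) h5
    interval_cases i <;> interval_cases j <;>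
      first
        | omega
        | (simp only [coeff_add, coeff_mono]; norm_num)
  · have hlt : p.totalDegree <
        ∑ x ∈ ((Finsupp.single 0 i + Finsupp.single 1 j : Fin 2 →₀ ℕ)).support,
          (Finsupp.single 0 i + Finsupp.single 1 j : Fin 2 →₀ ℕ) x := by
      rw [supsum]
      simp only [Finsupp.add_apply, Finsupp.single_apply]
      norm_num
      omega
    rw [coeff_eq_zero_of_totalDegree_lt hlt]
    have key00 : ¬((0:ℕ) = i ∧ (0:ℕ) = j) := by omega
    have key01 : ¬((0:ℕ) = i ∧ (1:ℕ) = j) := by omega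
    have key02 : ¬((0:ℕ) = i ∧ (2:ℕ) = j) := by omega
    have key03 : ¬((0:ℕ) = i ∧ (3:ℕ) = j) := by omega
    have key04 : ¬((0:ℕ) = i ∧ (4:ℕ) = j) := by omega
    have key05 : ¬((0:ℕ) = i ∧ (5:ℕ) = j) := by omega
    have key10 : ¬((1:ℕ) = i ∧ (0:ℕ) = j) := by omega
    have key11 : ¬((1:ℕ) = i ∧ (1:ℕ) = j) := by omega
    have key12 : ¬((1:ℕ) = i ∧ (2:ℕ) = j) := by omega
    have key13 : ¬((1:ℕ) = i ∧ (3:ℕ) = j) := by omega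
    have key14 : ¬((1:ℕ) = i ∧ (4:ℕ) = j) := by omega
    have key20 : ¬((2:ℕ) = i ∧ (0:ℕ) = j) := by omega
    have key21 : ¬((2:ℕ) = i ∧ (1:ℕ) = j) := by omega
    have key22 : ¬((2:ℕ) = i ∧ (2:ℕ) = j) := by omega
    have key23 : ¬((2:ℕ) = i ∧ (3:ℕ) = j) := by omega
    have key30 : ¬((3:ℕ) = i ∧ (0:ℕ) = j) := by omega
    have key31 : ¬((3:ℕ) = i ∧ (1:ℕ) = j) := by omega
    have key32 : ¬((3:ℕ) = i ∧ (2:ℕ) = j) := by omega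
    have key40 : ¬((4:ℕ) = i ∧ (0:ℕ) = j) := by omega
    have key41 : ¬((4:ℕ) = i ∧ (1:ℕ) = j) := by omega
    have key50 : ¬((5:ℕ) = i ∧ (0:ℕ) = j) := by omega
    simp only [coeff_add, coeff_mono, key00, key01, key02, key03, key04, key05, key10, key11, key12, key13, key14, key20, key21, key22, key23, key30, key31, key32, key40, key41, key50, if_false]
    norm_num

set_option maxHeartbeats 1600000 in
/-- A `P₅` polynomial (total degree ≤ 5) whose gradient vanishes on the boundary of
the reference triangle with vertices `(0,0)`, `(1,0)`, `(0,1)` is constant. -/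
theorem stmt_2 (p : MvPolynomial (Fin 2) ℝ)
    (hdeg : p.totalDegree ≤ 5)
    (hgrad : ∀ t ∈ Set.Icc (0 : ℝ) 1,
      (eval ![t, 0] (pderiv 0 p) = 0 ∧ eval ![t, 0] (pderiv 1 p) = 0) ∧
      (eval ![(0 : ℝ), t] (pderiv 0 p) = 0 ∧ eval ![(0 : ℝ), t] (pderiv 1 p) = 0) ∧
      (eval ![t, 1 - t] (pderiv 0 p) = 0 ∧ eval ![t, 1 - t] (pderiv 1 p) = 0)) :
    ∃ c : ℝ, p = C c := by
  obtain ⟨c, hrep⟩ := rep p hdeg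
  have hx0 : ∀ t : ℝ, eval ![t, 0] (pderiv 0 p) =
      (c 1 0) + ((2)*c 2 0)*t + ((3)*c 3 0)*t^2 + ((4)*c 4 0)*t^3 + ((5)*c 5 0)*t^4 := by
    intro t
    simp only [hrep, map_add, pderiv_mul, pderiv_pow, pderiv_C, pderiv_X_self, pderiv_X_of_ne (by decide : (1:Fin 2) ≠ 0), pderiv_X_of_ne (by decide : (0:Fin 2) ≠ 1), map_mul, map_pow, map_natCast, map_zero, map_one, eval_C, eval_X, Matrix.cons_val_zero, Matrix.cons_val_one, Matrix.head_cons]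
    ring
  have hy0 : ∀ t : ℝ, eval ![t, 0] (pderiv 1 p) =
      (c 0 1) + (c 1 1)*t + (c 2 1)*t^2 + (c 3 1)*t^3 + (c 4 1)*t^4 := by
    intro t
    simp only [hrep, map_add, pderiv_mul, pderiv_pow, pderiv_C, pderiv_X_self, pderiv_X_of_ne (by decide : (1:Fin 2) ≠ 0), pderiv_X_of_ne (by decide : (0:Fin 2) ≠ 1), map_mul, map_pow, map_natCast, map_zero, map_one, eval_C, eval_X, Matrix.cons_val_zero, Matrix.cons_val_one, Matrix.head_cons]
    ring
  have hx1 : ∀ t : ℝ, eval ![(0 : ℝ), t] (pderiv 0 p) =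
      (c 1 0) + (c 1 1)*t + (c 1 2)*t^2 + (c 1 3)*t^3 + (c 1 4)*t^4 := by
    intro t
    simp only [hrep, map_add, pderiv_mul, pderiv_pow, pderiv_C, pderiv_X_self, pderiv_X_of_ne (by decide : (1:Fin 2) ≠ 0), pderiv_X_of_ne (by decide : (0:Fin 2) ≠ 1), map_mul, map_pow, map_natCast, map_zero, map_one, eval_C, eval_X, Matrix.cons_val_zero, Matrix.cons_val_one, Matrix.head_cons]
    ring
  have hy1 : ∀ t : ℝ, eval ![(0 : ℝ), t] (pderiv 1 p) =
      (c 0 1) + ((2)*c 0 2)*t + ((3)*c 0 3)*t^2 + ((4)*c 0 4)*t^3 + ((5)*c 0 5)*t^4 := by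
    intro t
    simp only [hrep, map_add, pderiv_mul, pderiv_pow, pderiv_C, pderiv_X_self, pderiv_X_of_ne (by decide : (1:Fin 2) ≠ 0), pderiv_X_of_ne (by decide : (0:Fin 2) ≠ 1), map_mul, map_pow, map_natCast, map_zero, map_one, eval_C, eval_X, Matrix.cons_val_zero, Matrix.cons_val_one, Matrix.head_cons]
    ring
  have hx2 : ∀ t : ℝ, eval ![t, 1 - t] (pderiv 0 p) =
      (c 1 0 + c 1 1 + c 1 2 + c 1 3 + c 1 4) + (-c 1 1 + (-2)*c 1 2 + (-3)*c 1 3 + (-4)*c 1 4 + (2)*c 2 0 + (2)*c 2 1 + (2)*c 2 2 + (2)*c 2 3)*t + (c 1 2 + (3)*c 1 3 + (6)*c 1 4 + (-2)*c 2 1 + (-4)*c 2 2 + (-6)*c 2 3 + (3)*c 3 0 + (3)*c 3 1 + (3)*c 3 2)*t^2 + (-c 1 3 + (-4)*c 1 4 + (2)*c 2 2 + (6)*c 2 3 + (-3)*c 3 1 + (-6)*c 3 2 + (4)*c 4 0 + (4)*c 4 1)*t^3 + (c 1 4 + (-2)*c 2 3 + (3)*c 3 2 + (-4)*c 4 1 +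 (5)*c 5 0)*t^4 := by
    intro t
    simp only [hrep, map_add, pderiv_mul, pderiv_pow, pderiv_C, pderiv_X_self, pderiv_X_of_ne (by decide : (1:Fin 2) ≠ 0), pderiv_X_of_ne (by decide : (0:Fin 2) ≠ 1), map_mul, map_pow, map_natCast, map_zero, map_one, eval_C, eval_X, Matrix.cons_val_zero, Matrix.cons_val_one, Matrix.head_cons]
    ring
  have hy2 : ∀ t : ℝ, eval ![t, 1 - t] (pderiv 1 p) =
      (c 0 1 + (2)*c 0 2 + (3)*c 0 3 + (4)*c 0 4 + (5)*c 0 5) + ((-2)*c 0 2 + (-6)*c 0 3 + (-12)*c 0 4 + (-20)*c 0 5 + c 1 1 + (2)*c 1 2 + (3)*c 1 3 + (4)*c 1 4)*t + ((3)*c 0 3 + (12)*c 0 4 + (30)*c 0 5 + (-2)*c 1 2 + (-6)*c 1 3 + (-12)*c 1 4 + c 2 1 + (2)*c 2 2 + (3)*c 2 3)*t^2 + ((-4)*c 0 4 + (-20)*c 0 5 + (3)*c 1 3 + (12)*c 1 4 + (-2)*c 2 2 + (-6)*c 2 3 + c 3 1 + (2)*c 3 2)*t^3 + ((5)*c 0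 5 + (-4)*c 1 4 + (3)*c 2 3 + (-2)*c 3 2 + c 4 1)*t^4 := by
    intro t
    simp only [hrep, map_add, pderiv_mul, pderiv_pow, pderiv_C, pderiv_X_self, pderiv_X_of_ne (by decide : (1:Fin 2) ≠ 0), pderiv_X_of_ne (by decide : (0:Fin 2) ≠ 1), map_mul, map_pow, map_natCast, map_zero, map_one, eval_C, eval_X, Matrix.cons_val_zero, Matrix.cons_val_one, Matrix.head_cons]
    ring
  obtain ⟨hx0a, hx0b, hx0c, hx0d, hx0e⟩ :=
    quartic_aux _ _ _ _ _ (fun t ht => by rw [← hx0 t]; exact (hgrad t ht).1.1)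
  obtain ⟨hy0a, hy0b, hy0c, hy0d, hy0e⟩ :=
    quartic_aux _ _ _ _ _ (fun t ht => by rw [← hy0 t]; exact (hgrad t ht).1.2)
  obtain ⟨hx1a, hx1b, hx1c, hx1d, hx1e⟩ :=
    quartic_aux _ _ _ _ _ (fun t ht => by rw [← hx1 t]; exact (hgrad t ht).2.1.1)
  obtain ⟨hy1a, hy1b, hy1c, hy1d, hy1e⟩ :=
    quartic_aux _ _ _ _ _ (fun t ht => by rw [← hy1 t]; exact (hgrad t ht).2.1.2)
  obtain ⟨hx2a, hx2b, hx2c, hx2d, hx2e⟩ :=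
    quartic_aux _ _ _ _ _ (fun t ht => by rw [← hx2 t]; exact (hgrad t ht).2.2.1)
  obtain ⟨hy2a, hy2b, hy2c, hy2d, hy2e⟩ :=
    quartic_aux _ _ _ _ _ (fun t ht => by rw [← hy2 t]; exact (hgrad t ht).2.2.2)
  refine ⟨c 0 0, ?_⟩
  have hz01 : c 0 1 = 0 := by linarith [hx0a, hx0b, hx0c, hx0d, hx0e, hy0a, hy0b, hy0c, hy0d, hy0e, hx1a, hx1b, hx1c, hx1d, hx1e, hy1a, hy1b, hy1c, hy1d, hy1e, hx2a, hx2b, hx2c, hx2d, hx2e, hy2a, hy2b, hy2c, hy2d, hy2e]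
  have hz02 : c 0 2 = 0 := by linarith [hx0a, hx0b, hx0c, hx0d, hx0e, hy0a, hy0b, hy0c, hy0d, hy0e, hx1a, hx1b, hx1c, hx1d, hx1e, hy1a, hy1b, hy1c, hy1d, hy1e, hx2a, hx2b, hx2c, hx2d, hx2e, hy2a, hy2b, hy2c, hy2d, hy2e]
  have hz03 : c 0 3 = 0 := by linarith [hx0a, hx0b, hx0c, hx0d, hx0e, hy0a, hy0b, hy0c, hy0d, hy0e, hx1a, hx1b, hx1c, hx1d, hx1e, hy1a, hy1b, hy1c, hy1d, hy1e, hx2a, hx2b, hx2c, hx2d, hx2e, hy2a, hy2b, hy2c, hy2d, hy2e]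
  have hz04 : c 0 4 = 0 := by linarith [hx0a, hx0b, hx0c, hx0d, hx0e, hy0a, hy0b, hy0c, hy0d, hy0e, hx1a, hx1b, hx1c, hx1d, hx1e, hy1a, hy1b, hy1c, hy1d, hy1e, hx2a, hx2b, hx2c, hx2d, hx2e, hy2a, hy2b, hy2c, hy2d, hy2e]
  have hz05 : c 0 5 = 0 := by linarith [hx0a, hx0b, hx0c, hx0d, hx0e, hy0a, hy0b, hy0c, hy0d, hy0e, hx1a, hx1b, hx1c, hx1d, hx1e, hy1a, hy1b, hy1c, hy1d, hy1e, hx2a, hx2b, hx2c, hx2d, hx2e, hy2a, hy2b, hy2c, hy2d, hy2e]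
  have hz10 : c 1 0 = 0 := by linarith [hx0a, hx0b, hx0c, hx0d, hx0e, hy0a, hy0b, hy0c, hy0d, hy0e, hx1a, hx1b, hx1c, hx1d, hx1e, hy1a, hy1b, hy1c, hy1d, hy1e, hx2a, hx2b, hx2c, hx2d, hx2e, hy2a, hy2b, hy2c, hy2d, hy2e]
  have hz11 : c 1 1 = 0 := by linarith [hx0a, hx0b, hx0c, hx0d, hx0e, hy0a, hy0b, hy0c, hy0d, hy0e, hx1a, hx1b, hx1c, hx1d, hx1e, hy1a, hy1b, hy1c, hy1d, hy1e, hx2a, hx2b, hx2c, hx2d, hx2e, hy2a, hy2b, hy2c, hy2d, hy2e]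
  have hz12 : c 1 2 = 0 := by linarith [hx0a, hx0b, hx0c, hx0d, hx0e, hy0a, hy0b, hy0c, hy0d, hy0e, hx1a, hx1b, hx1c, hx1d, hx1e, hy1a, hy1b, hy1c, hy1d, hy1e, hx2a, hx2b, hx2c, hx2d, hx2e, hy2a, hy2b, hy2c, hy2d, hy2e]
  have hz13 : c 1 3 = 0 := by linarith [hx0a, hx0b, hx0c, hx0d, hx0e, hy0a, hy0b, hy0c, hy0d, hy0e, hx1a, hx1b, hx1c, hx1d, hx1e, hy1a, hy1b, hy1c, hy1d, hy1e, hx2a, hx2b, hx2c, hx2d, hx2e, hy2a, hy2b, hy2c, hy2d, hy2e]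
  have hz14 : c 1 4 = 0 := by linarith [hx0a, hx0b, hx0c, hx0d, hx0e, hy0a, hy0b, hy0c, hy0d, hy0e, hx1a, hx1b, hx1c, hx1d, hx1e, hy1a, hy1b, hy1c, hy1d, hy1e, hx2a, hx2b, hx2c, hx2d, hx2e, hy2a, hy2b, hy2c, hy2d, hy2e]
  have hz20 : c 2 0 = 0 := by linarith [hx0a, hx0b, hx0c, hx0d, hx0e, hy0a, hy0b, hy0c, hy0d, hy0e, hx1a, hx1b, hx1c, hx1d, hx1e, hy1a, hy1b, hy1c, hy1d, hy1e, hx2a, hx2b, hx2c, hx2d, hx2e, hy2a, hy2b, hy2c, hy2d, hy2e]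
  have hz21 : c 2 1 = 0 := by linarith [hx0a, hx0b, hx0c, hx0d, hx0e, hy0a, hy0b, hy0c, hy0d, hy0e, hx1a, hx1b, hx1c, hx1d, hx1e, hy1a, hy1b, hy1c, hy1d, hy1e, hx2a, hx2b, hx2c, hx2d, hx2e, hy2a, hy2b, hy2c, hy2d, hy2e]
  have hz22 : c 2 2 = 0 := by linarith [hx0a, hx0b, hx0c, hx0d, hx0e, hy0a, hy0b, hy0c, hy0d, hy0e, hx1a, hx1b, hx1c, hx1d, hx1e, hy1a, hy1b, hy1c, hy1d, hy1e, hx2a, hx2b, hx2c, hx2d, hx2e, hy2a, hy2b, hy2c, hy2d, hy2e]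
  have hz23 : c 2 3 = 0 := by linarith [hx0a, hx0b, hx0c, hx0d, hx0e, hy0a, hy0b, hy0c, hy0d, hy0e, hx1a, hx1b, hx1c, hx1d, hx1e, hy1a, hy1b, hy1c, hy1d, hy1e, hx2a, hx2b, hx2c, hx2d, hx2e, hy2a, hy2b, hy2c, hy2d, hy2e]
  have hz30 : c 3 0 = 0 := by linarith [hx0a, hx0b, hx0c, hx0d, hx0e, hy0a, hy0b, hy0c, hy0d, hy0e, hx1a, hx1b, hx1c, hx1d, hx1e, hy1a, hy1b, hy1c, hy1d, hy1e, hx2a, hx2b, hx2c, hx2d, hx2e, hy2a, hy2b, hy2c, hy2d, hy2e]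
  have hz31 : c 3 1 = 0 := by linarith [hx0a, hx0b, hx0c, hx0d, hx0e, hy0a, hy0b, hy0c, hy0d, hy0e, hx1a, hx1b, hx1c, hx1d, hx1e, hy1a, hy1b, hy1c, hy1d, hy1e, hx2a, hx2b, hx2c, hx2d, hx2e, hy2a, hy2b, hy2c, hy2d, hy2e]
  have hz32 : c 3 2 = 0 := by linarith [hx0a, hx0b, hx0c, hx0d, hx0e, hy0a, hy0b, hy0c, hy0d, hy0e, hx1a, hx1b, hx1c, hx1d, hx1e, hy1a, hy1b, hy1c, hy1d, hy1e, hx2a, hx2b, hx2c, hx2d, hx2e, hy2a, hy2b, hy2c, hy2d, hy2e]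
  have hz40 : c 4 0 = 0 := by linarith [hx0a, hx0b, hx0c, hx0d, hx0e, hy0a, hy0b, hy0c, hy0d, hy0e, hx1a, hx1b, hx1c, hx1d, hx1e, hy1a, hy1b, hy1c, hy1d, hy1e, hx2a, hx2b, hx2c, hx2d, hx2e, hy2a, hy2b, hy2c, hy2d, hy2e]
  have hz41 : c 4 1 = 0 := by linarith [hx0a, hx0b, hx0c, hx0d, hx0e, hy0a, hy0b, hy0c, hy0d, hy0e, hx1a, hx1b, hx1c, hx1d, hx1e, hy1a, hy1b, hy1c, hy1d, hy1e, hx2a, hx2b, hx2c, hx2d, hx2e, hy2a, hy2b, hy2c, hy2d, hy2e]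
  have hz50 : c 5 0 = 0 := by linarith [hx0a, hx0b, hx0c, hx0d, hx0e, hy0a, hy0b, hy0c, hy0d, hy0e, hx1a, hx1b, hx1c, hx1d, hx1e, hy1a, hy1b, hy1c, hy1d, hy1e, hx2a, hx2b, hx2c, hx2d, hx2e, hy2a, hy2b, hy2c, hy2d, hy2e]
  rw [hrep, hz01, hz02, hz03, hz04, hz05, hz10, hz11, hz12, hz13, hz14, hz20, hz21, hz22, hz23, hz30, hz31, hz32, hz40, hz41, hz50]
  simp
end

section
/- Let p be a real polynomial in two variables X, Y (of arbitrary degree) such that ∂p/∂X(x,y) = 0 and ∂p/∂Y(x,y) = 0 for every point (x,y) on the boundary of the unit square [0,1]². Then there exist a constant c ∈ ℝ and a real polynomial q(X,Y) such that p(X,Y) = c + X²(1−X)²Y²(1−Y)² · q(X,Y). -/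
open MvPolynomial

section Aux

lemma aux_sub_dvd (i : Fin 2) (a : ℝ) (r : MvPolynomial (Fin 2) ℝ) :
    (X i - C a) ∣ (r - aeval (Function.update X i (C a)) r) := by
  induction r using MvPolynomial.induction_on with
  | C s => simp [algebraMap_eq]
  | add f g hf hg =>
    have h := dvd_add hf hg
    have : f + g - aeval (Function.update X i (C a)) (f + g)
        = (f - aeval (Function.update X i (C a)) f)
          + (g - aeval (Function.update X i (C a)) g) := by
      rw [map_add]; ring
    rw [this]; exact h
  | mul_X f j hf =>
    rcases eq_or_ne j i with rfl | h
    · have : f * X j - aeval (Function.update X j (C a)) (f * X j)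
           = (f - aeval (Function.update X j (C a)) f) * X j
             + aeval (Function.update X j (C a)) f * (X j - C a) := by
        rw [map_mul, aeval_X, Function.update_self]; ring
      rw [this]
      exact dvd_add (hf.mul_right _) (Dvd.intro_left _ rfl)
    · have : f * X j - aeval (Function.update X i (C a)) (f * X j)
           = (f - aeval (Function.update X i (C a)) f) * X j := by
        rw [map_mul, aeval_X, Function.update_of_ne h]; ring
      rw [this]; exact hf.mul_right _

lemma aux_root_dvd (i : Fin 2) (a : ℝ) (r : MvPolynomial (Fin 2) ℝ)
    (h : aeval (Function.update X i (C a)) r = 0) : (X i - C a) ∣ r := by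
  have := aux_sub_dvd i a r
  rwa [h, sub_zero] at this

noncomputable def toF : MvPolynomial (Fin 2) ℝ →ₐ[ℝ] Polynomial (Polynomial ℝ) :=
  aeval ![Polynomial.C Polynomial.X, Polynomial.X]

noncomputable def backF : Polynomial (Polynomial ℝ) →+* MvPolynomial (Fin 2) ℝ :=
  Polynomial.eval₂RingHom (Polynomial.eval₂RingHom MvPolynomial.C (X 0)) (X 1)

lemma backF_toF (f : MvPolynomial (Fin 2) ℝ) : backF (toF f) = f := by
  have h : (backF.comp (toF.toRingHom)) = RingHom.id _ := by
    apply MvPolynomial.ringHom_ext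
    · intro r
      simp [backF, toF, algebraMap_eq]
    · intro i
      fin_cases i <;> simp [backF, toF]
  exact RingHom.congr_fun h f

lemma toF_inj : Function.Injective toF := by
  intro a b h
  have : backF (toF a) = backF (toF b) := by rw [h]
  rwa [backF_toF, backF_toF] at this

lemma eval_toF (x y : ℝ) (f : MvPolynomial (Fin 2) ℝ) :
    Polynomial.eval₂ (Polynomial.evalRingHom x) y (toF f) = eval ![x, y] f := by
  show (Polynomial.eval₂RingHom (Polynomial.evalRingHom x) y) (toF f) = _
  rw [toF, aeval_def, eval₂_comp_left]
  have : eval ![x, y] f = eval₂ (RingHom.id ℝ) ![x, y] f := rfl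
  rw [this]
  congr 1
  · ext r; simp
  · funext i; fin_cases i <;> simp

lemma vanish2 (f : MvPolynomial (Fin 2) ℝ)
    (h : ∀ x ∈ Set.Icc (0:ℝ) 1, ∀ y : ℝ, eval ![x, y] f = 0) : f = 0 := by
  apply toF_inj
  rw [map_zero]
  ext n
  rw [Polynomial.coeff_zero]
  have hIcc : (Set.Icc (0:ℝ) 1).Infinite := Set.Icc_infinite (by norm_num)
  have key : ∀ x ∈ Set.Icc (0:ℝ) 1, ((toF f).coeff n).eval x = 0 := by
    intro x hx
    have hmap : (toF f).map (Polynomial.evalRingHom x) = 0 := by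
      apply Polynomial.eq_zero_of_infinite_isRoot
      apply Set.Infinite.mono (s := Set.univ) _ (Set.infinite_univ)
      intro y _
      show Polynomial.IsRoot _ y
      rw [Polynomial.IsRoot, Polynomial.eval_map, eval_toF]
      exact h x hx y
    have := congrArg (fun g => Polynomial.coeff g n) hmap
    simpa using this
  have : ((toF f).coeff n) = 0 := by
    apply Polynomial.eq_zero_of_infinite_isRoot
    exact Set.Infinite.mono (fun x hx => key x hx) hIcc
  rw [this]

lemma eval_aeval' (w : Fin 2 → ℝ) (v : Fin 2 → MvPolynomial (Fin 2) ℝ)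
    (g : MvPolynomial (Fin 2) ℝ) :
    eval w (aeval v g) = eval (fun i => eval w (v i)) g := by
  rw [aeval_eq_bind₁]
  exact eval₂Hom_bind₁ (RingHom.id ℝ) w v g

lemma swap_eval (a b : ℝ) (f : MvPolynomial (Fin 2) ℝ) :
    eval ![a, b] (rename (Equiv.swap (0:Fin 2) 1) f) = eval ![b, a] f := by
  rw [eval_rename]
  have : (![a, b] ∘ ⇑(Equiv.swap (0:Fin 2) 1)) = ![b, a] := by
    funext i; fin_cases i <;> simp
  rw [this]

lemma vanish2' (f : MvPolynomial (Fin 2) ℝ)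
    (h : ∀ y ∈ Set.Icc (0:ℝ) 1, ∀ x : ℝ, eval ![x, y] f = 0) : f = 0 := by
  have h0 : rename (Equiv.swap (0:Fin 2) 1) f = 0 := by
    apply vanish2
    intro a ha b
    rw [swap_eval]
    exact h a ha b
  have hinj := MvPolynomial.rename_injective (R := ℝ)
      (f := ⇑(Equiv.swap (0:Fin 2) 1)) (Equiv.injective _)
  apply hinj
  rw [h0, map_zero]

lemma chain (b : ℝ) (p : MvPolynomial (Fin 2) ℝ) :
    Polynomial.derivative (aeval ![Polynomial.X, Polynomial.C b] p)
      = aeval ![Polynomial.X, Polynomial.C b] (pderiv 0 p) := by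
  induction p using MvPolynomial.induction_on with
  | C s => simp
  | add f g hf hg => simp [hf, hg]
  | mul_X f j hf =>
    fin_cases j
    · simp only [map_mul, aeval_X, pderiv_mul, map_add]
      rw [Polynomial.derivative_mul, hf]
      simp
    · simp only [map_mul, aeval_X, pderiv_mul, map_add]
      rw [Polynomial.derivative_mul, hf]
      simp

lemma chain' (a : ℝ) (p : MvPolynomial (Fin 2) ℝ) :
    Polynomial.derivative (aeval ![Polynomial.C a, Polynomial.X] p)
      = aeval ![Polynomial.C a, Polynomial.X] (pderiv 1 p) := by
  have hsw : Function.Injective (⇑(Equiv.swap (0:Fin 2) 1)) := Equiv.injective _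
  have hcomp : (![Polynomial.X, Polynomial.C a] ∘ ⇑(Equiv.swap (0:Fin 2) 1))
      = ![Polynomial.C a, Polynomial.X] := by
    funext i; fin_cases i <;> simp
  have h1 : ∀ g : MvPolynomial (Fin 2) ℝ, aeval ![Polynomial.C a, Polynomial.X] g
      = aeval ![Polynomial.X, Polynomial.C a] (rename (Equiv.swap (0:Fin 2) 1) g) := by
    intro g
    rw [aeval_rename, hcomp]
  rw [h1 p, chain, h1 (pderiv 1 p)]
  congr 1
  have := MvPolynomial.pderiv_rename hsw 1 p
  simpa using this

lemma eval_slice (x : ℝ) (v : Fin 2 → Polynomial ℝ) (g : MvPolynomial (Fin 2) ℝ) :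
    Polynomial.eval x (aeval v g) = eval (fun i => Polynomial.eval x (v i)) g := by
  show (Polynomial.evalRingHom x) (aeval v g) = _
  rw [aeval_def, eval₂_comp_left]
  have : eval (fun i => Polynomial.eval x (v i)) g
      = eval₂ (RingHom.id ℝ) (fun i => Polynomial.eval x (v i)) g := rfl
  rw [this]
  congr 1
  ext r; simp

lemma slice_const (b : ℝ) (g : MvPolynomial (Fin 2) ℝ)
    (h : ∀ x ∈ Set.Icc (0:ℝ) 1, eval ![x, b] (pderiv 0 g) = 0) :
    ∀ x : ℝ, eval ![x, b] g = eval ![0, b] g := by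
  have hIcc : (Set.Icc (0:ℝ) 1).Infinite := Set.Icc_infinite (by norm_num)
  set u := aeval ![Polynomial.X, Polynomial.C b] g with hu
  have hvec : ∀ x : ℝ, (fun i => Polynomial.eval x (![Polynomial.X, Polynomial.C b] i))
      = ![x, b] := by
    intro x; funext i; fin_cases i <;> simp
  have hueval : ∀ x : ℝ, u.eval x = eval ![x, b] g := by
    intro x; rw [hu, eval_slice, hvec]
  have hd : Polynomial.derivative u = 0 := by
    rw [hu, chain]
    apply Polynomial.eq_zero_of_infinite_isRoot
    apply Set.Infinite.mono _ hIcc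
    intro x hx
    show Polynomial.IsRoot _ x
    rw [Polynomial.IsRoot, eval_slice, hvec]
    exact h x hx
  have hC := Polynomial.eq_C_of_derivative_eq_zero hd
  intro x
  rw [← hueval x, ← hueval 0, hC]
  simp

lemma slice_const' (a : ℝ) (g : MvPolynomial (Fin 2) ℝ)
    (h : ∀ y ∈ Set.Icc (0:ℝ) 1, eval ![a, y] (pderiv 1 g) = 0) :
    ∀ y : ℝ, eval ![a, y] g = eval ![a, 0] g := by
  have hIcc : (Set.Icc (0:ℝ) 1).Infinite := Set.Icc_infinite (by norm_num)
  set u := aeval ![Polynomial.C a, Polynomial.X] g with hu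
  have hvec : ∀ y : ℝ, (fun i => Polynomial.eval y (![Polynomial.C a, Polynomial.X] i))
      = ![a, y] := by
    intro y; funext i; fin_cases i <;> simp
  have hueval : ∀ y : ℝ, u.eval y = eval ![a, y] g := by
    intro y; rw [hu, eval_slice, hvec]
  have hd : Polynomial.derivative u = 0 := by
    rw [hu, chain']
    apply Polynomial.eq_zero_of_infinite_isRoot
    apply Set.Infinite.mono _ hIcc
    intro y hy
    show Polynomial.IsRoot _ y
    rw [Polynomial.IsRoot, eval_slice, hvec]
    exact h y hy
  have hC := Polynomial.eq_C_of_derivative_eq_zero hd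
  intro y
  rw [← hueval y, ← hueval 0, hC]
  simp

lemma double_dvd (i : Fin 2) (a : ℝ) (r : MvPolynomial (Fin 2) ℝ)
    (h1 : (X i - C a) ∣ r) (h2 : (X i - C a) ∣ pderiv i r) :
    (X i - C a) ^ 2 ∣ r := by
  obtain ⟨t, rfl⟩ := h1
  have hder : pderiv i ((X i - C a) * t) = t + (X i - C a) * pderiv i t := by
    rw [pderiv_mul, map_sub, pderiv_X_self, pderiv_C, sub_zero, one_mul]
  have ht : (X i - C a) ∣ t := by
    have : t = pderiv i ((X i - C a) * t) - (X i - C a) * pderiv i t := by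
      rw [hder]; ring
    rw [this]
    exact dvd_sub h2 (Dvd.intro _ rfl)
  obtain ⟨s, rfl⟩ := ht
  exact ⟨s, by ring⟩

lemma bezout_sq (u v r : MvPolynomial (Fin 2) ℝ) (huv : u + v = 1)
    (hu : u ^ 2 ∣ r) (hv : v ^ 2 ∣ r) : u ^ 2 * v ^ 2 ∣ r := by
  obtain ⟨a, ha⟩ := hu
  obtain ⟨b, hb⟩ := hv
  refine ⟨(u + 3 * v) * b + (v + 3 * u) * a, ?_⟩
  have h3 : (u + v) ^ 3 = 1 := by rw [huv]; ring
  calc r = r * (u + v) ^ 3 := by rw [h3, mul_one]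
    _ = (v ^ 2 * b) * (u ^ 2 * (u + 3 * v)) + (u ^ 2 * a) * (v ^ 2 * (v + 3 * u)) := by
        rw [← ha, ← hb]; ring
    _ = u ^ 2 * v ^ 2 * ((u + 3 * v) * b + (v + 3 * u) * a) := by ring

end Aux

/-- A real polynomial in two variables whose gradient vanishes on the boundary of the
unit square can be written as `c + X²(1−X)²Y²(1−Y)² · q`. -/
theorem stmt_3 (p : MvPolynomial (Fin 2) ℝ)
    (hgrad : ∀ x y : ℝ, x ∈ Set.Icc (0 : ℝ) 1 → y ∈ Set.Icc (0 : ℝ) 1 →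
      (x = 0 ∨ x = 1 ∨ y = 0 ∨ y = 1) →
      eval ![x, y] (pderiv 0 p) = 0 ∧ eval ![x, y] (pderiv 1 p) = 0) :
    ∃ (c : ℝ) (q : MvPolynomial (Fin 2) ℝ),
      p = C c + (X 0) ^ 2 * (1 - X 0) ^ 2 * (X 1) ^ 2 * (1 - X 1) ^ 2 * q := by
  have h0m : (0:ℝ) ∈ Set.Icc (0:ℝ) 1 := by constructor <;> norm_num
  have h1m : (1:ℝ) ∈ Set.Icc (0:ℝ) 1 := by constructor <;> norm_num
  set c := eval ![0, 0] p with hc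
  -- edge facts
  have e_y0 : ∀ x ∈ Set.Icc (0:ℝ) 1,
      eval ![x, 0] (pderiv 0 p) = 0 ∧ eval ![x, 0] (pderiv 1 p) = 0 :=
    fun x hx => hgrad x 0 hx h0m (Or.inr (Or.inr (Or.inl rfl)))
  have e_y1 : ∀ x ∈ Set.Icc (0:ℝ) 1,
      eval ![x, 1] (pderiv 0 p) = 0 ∧ eval ![x, 1] (pderiv 1 p) = 0 :=
    fun x hx => hgrad x 1 hx h1m (Or.inr (Or.inr (Or.inr rfl)))
  have e_x0 : ∀ y ∈ Set.Icc (0:ℝ) 1,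
      eval ![0, y] (pderiv 0 p) = 0 ∧ eval ![0, y] (pderiv 1 p) = 0 :=
    fun y hy => hgrad 0 y h0m hy (Or.inl rfl)
  have e_x1 : ∀ y ∈ Set.Icc (0:ℝ) 1,
      eval ![1, y] (pderiv 0 p) = 0 ∧ eval ![1, y] (pderiv 1 p) = 0 :=
    fun y hy => hgrad 1 y h1m hy (Or.inr (Or.inl rfl))
  -- constancy of the four edge restrictions, all with value c
  have hA : ∀ x : ℝ, eval ![x, 0] p = c := by
    have := slice_const 0 p (fun x hx => (e_y0 x hx).1)
    intro x; rw [this x, hc]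
  have hCe : ∀ y : ℝ, eval ![0, y] p = c := by
    have := slice_const' 0 p (fun y hy => (e_x0 y hy).2)
    intro y; rw [this y, hc]
  have hB : ∀ x : ℝ, eval ![x, 1] p = c := by
    have := slice_const 1 p (fun x hx => (e_y1 x hx).1)
    intro x; rw [this x, hCe 1]
  have hD : ∀ y : ℝ, eval ![1, y] p = c := by
    have := slice_const' 1 p (fun y hy => (e_x1 y hy).2)
    intro y; rw [this y, hA 1]
  -- substitution identities
  have upd_eval_1 : ∀ (b x y : ℝ),
      (fun i => eval ![x, y] (Function.update X 1 (C b) i)) = ![x, b] := by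
    intro b x y; funext i; fin_cases i <;> simp
  have upd_eval_0 : ∀ (a x y : ℝ),
      (fun i => eval ![x, y] (Function.update X 0 (C a) i)) = ![a, y] := by
    intro a x y; funext i; fin_cases i <;> simp
  have hφ0 : aeval (Function.update X 1 (C 0)) p = C c := by
    have : aeval (Function.update X 1 (C 0)) p - C c = 0 := by
      apply vanish2
      intro x hx y
      rw [map_sub, eval_aeval', upd_eval_1, hA x]
      simp
    exact sub_eq_zero.mp this
  have hφ1 : aeval (Function.update X 1 (C 1)) p = C c := by
    have : aeval (Function.update X 1 (C 1)) p - C c = 0 := by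
      apply vanish2
      intro x hx y
      rw [map_sub, eval_aeval', upd_eval_1, hB x]
      simp
    exact sub_eq_zero.mp this
  have hψ0 : aeval (Function.update X 0 (C 0)) p = C c := by
    have : aeval (Function.update X 0 (C 0)) p - C c = 0 := by
      apply vanish2'
      intro y hy x
      rw [map_sub, eval_aeval', upd_eval_0, hCe y]
      simp
    exact sub_eq_zero.mp this
  have hψ1 : aeval (Function.update X 0 (C 1)) p = C c := by
    have : aeval (Function.update X 0 (C 1)) p - C c = 0 := by
      apply vanish2'
      intro y hy x
      rw [map_sub, eval_aeval', upd_eval_0, hD y]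
      simp
    exact sub_eq_zero.mp this
  -- vanishing of substituted partial derivatives
  have hdφ0 : aeval (Function.update X 1 (C (0:ℝ))) (pderiv 1 p) = (0 : MvPolynomial (Fin 2) ℝ) := by
    apply vanish2
    intro x hx y
    rw [eval_aeval', upd_eval_1]
    exact (e_y0 x hx).2
  have hdφ1 : aeval (Function.update X 1 (C (1:ℝ))) (pderiv 1 p) = (0 : MvPolynomial (Fin 2) ℝ) := by
    apply vanish2
    intro x hx y
    rw [eval_aeval', upd_eval_1]
    exact (e_y1 x hx).2
  have hdψ0 : aeval (Function.update X 0 (C (0:ℝ))) (pderiv 0 p) = (0 : MvPolynomial (Fin 2) ℝ) := by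
    apply vanish2'
    intro y hy x
    rw [eval_aeval', upd_eval_0]
    exact (e_x0 y hy).1
  have hdψ1 : aeval (Function.update X 0 (C (1:ℝ))) (pderiv 0 p) = (0 : MvPolynomial (Fin 2) ℝ) := by
    apply vanish2'
    intro y hy x
    rw [eval_aeval', upd_eval_0]
    exact (e_x1 y hy).1
  -- divisibility in the Y-variable
  set r := p - C c with hr
  have hpd1r : pderiv 1 r = pderiv 1 p := by rw [hr, map_sub, pderiv_C, sub_zero]
  have hpd0r : pderiv 0 r = pderiv 0 p := by rw [hr, map_sub, pderiv_C, sub_zero]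
  have haevalCc : ∀ (i : Fin 2) (a : ℝ),
      aeval (Function.update X i (C a)) (C c) = C c := by
    intro i a; simp [algebraMap_eq]
  have sq10 : (X 1 - C 0) ^ 2 ∣ r := by
    apply double_dvd
    · exact aux_root_dvd 1 0 r (by rw [hr, map_sub, hφ0, haevalCc, sub_self])
    · rw [hpd1r]; exact aux_root_dvd 1 0 _ hdφ0
  have sq11 : (X 1 - C 1) ^ 2 ∣ r := by
    apply double_dvd
    · exact aux_root_dvd 1 1 r (by rw [hr, map_sub, hφ1, haevalCc, sub_self])
    · rw [hpd1r]; exact aux_root_dvd 1 1 _ hdφ1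
  have sq10' : (X 1 : MvPolynomial (Fin 2) ℝ) ^ 2 ∣ r := by
    have h : (X 1 : MvPolynomial (Fin 2) ℝ) = X 1 - C 0 := by simp
    rw [h]; exact sq10
  have sq11' : (1 - X 1 : MvPolynomial (Fin 2) ℝ) ^ 2 ∣ r := by
    have h : (1 - X 1 : MvPolynomial (Fin 2) ℝ) ^ 2 = (X 1 - C 1) ^ 2 := by
      rw [map_one]; ring
    rw [h]; exact sq11
  obtain ⟨s, hs⟩ := bezout_sq (X 1) (1 - X 1) r (by ring) sq10' sq11'
  rw [hr] at hs
  -- now the X-variable on s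
  have hAne : ((X 1 : MvPolynomial (Fin 2) ℝ) ^ 2 * (1 - X 1) ^ 2) ≠ 0 := by
    intro h
    have h2 := congrArg (eval ![0, 2]) h
    simp at h2
    norm_num at h2
  have hAfix : ∀ a : ℝ, aeval (Function.update X 0 (C a))
      ((X 1 : MvPolynomial (Fin 2) ℝ) ^ 2 * (1 - X 1) ^ 2)
      = (X 1 : MvPolynomial (Fin 2) ℝ) ^ 2 * (1 - X 1) ^ 2 := by
    intro a
    have h1 : (1 : Fin 2) ≠ 0 := by decide
    simp [Function.update_of_ne h1]
  have hpdA : pderiv 0 ((X 1 : MvPolynomial (Fin 2) ℝ) ^ 2 * (1 - X 1) ^ 2) = 0 := by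
    have h1 : pderiv (0 : Fin 2) (X 1 : MvPolynomial (Fin 2) ℝ) = 0 :=
      pderiv_X_of_ne (by decide)
    simp [pderiv_mul, pderiv_pow, h1, pderiv_one]
  have key : ∀ a : ℝ, aeval (Function.update X 0 (C a)) p = C c →
      aeval (Function.update X 0 (C a)) (pderiv 0 p) = 0 → (X 0 - C a) ^ 2 ∣ s := by
    intro a hpa hda
    have hsub : aeval (Function.update X 0 (C a)) s = 0 := by
      have h1 : aeval (Function.update X 0 (C a)) (p - C c)
          = (X 1) ^ 2 * (1 - X 1) ^ 2 * aeval (Function.update X 0 (C a)) s := by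
        rw [hs, map_mul, hAfix]
      rw [map_sub, hpa, haevalCc, sub_self] at h1
      exact ((mul_eq_zero.mp h1.symm).resolve_left hAne)
    have hsubd : aeval (Function.update X 0 (C a)) (pderiv 0 s) = 0 := by
      have h2 : pderiv 0 (p - C c) = (X 1) ^ 2 * (1 - X 1) ^ 2 * pderiv 0 s := by
        rw [hs, pderiv_mul, hpdA, zero_mul, zero_add]
      have h3 : aeval (Function.update X 0 (C a)) (pderiv 0 (p - C c))
          = (X 1) ^ 2 * (1 - X 1) ^ 2 * aeval (Function.update X 0 (C a)) (pderiv 0 s) := by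
        rw [h2, map_mul, hAfix]
      rw [map_sub, pderiv_C, sub_zero, hda] at h3
      exact ((mul_eq_zero.mp h3.symm).resolve_left hAne)
    exact double_dvd 0 a s (aux_root_dvd 0 a s hsub) (aux_root_dvd 0 a _ hsubd)
  have sq00 : (X 0 : MvPolynomial (Fin 2) ℝ) ^ 2 ∣ s := by
    have h : (X 0 : MvPolynomial (Fin 2) ℝ) = X 0 - C 0 := by simp
    rw [h]; exact key 0 hψ0 hdψ0
  have sq01 : (1 - X 0 : MvPolynomial (Fin 2) ℝ) ^ 2 ∣ s := by
    have h : (1 - X 0 : MvPolynomial (Fin 2) ℝ) ^ 2 = (X 0 - C 1) ^ 2 := by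
      rw [map_one]; ring
    rw [h]; exact key 1 hψ1 hdψ1
  obtain ⟨q, hq⟩ := bezout_sq (X 0) (1 - X 0) s (by ring) sq00 sq01
  refine ⟨c, q, ?_⟩
  linear_combination hs + ((X 1 : MvPolynomial (Fin 2) ℝ) ^ 2 * (1 - X 1) ^ 2) * hq
end

section
/- Let p be a real polynomial in two variables X, Y (of arbitrary degree) such that ∂p/∂X(x,y) = 0 and ∂p/∂Y(x,y) = 0 for every point (x,y) on the boundary of the reference triangle with vertices (0,0), (1,0), (0,1). Then there exist a constant c ∈ ℝ and a real polynomial q(X,Y) such that p(X,Y) = c + X²Y²(1−X−Y)² · q(X,Y). -/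
open MvPolynomial

namespace Stmt4Aux
noncomputable def E0 : MvPolynomial (Fin 2) ℝ →ₐ[ℝ] MvPolynomial (Fin 2) ℝ := aeval ![0, X 1]
noncomputable def E1 : MvPolynomial (Fin 2) ℝ →ₐ[ℝ] MvPolynomial (Fin 2) ℝ := aeval ![X 0, 0]
noncomputable def A : MvPolynomial (Fin 2) ℝ →ₐ[ℝ] MvPolynomial (Fin 2) ℝ := aeval ![X 0, 1 - X 0 - X 1]
@[simp] lemma E0_X0 : E0 (X 0) = 0 := by simp [E0]
@[simp] lemma E0_X1 : E0 (X 1) = X 1 := by simp [E0]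
@[simp] lemma E1_X0 : E1 (X 0) = X 0 := by simp [E1]
@[simp] lemma E1_X1 : E1 (X 1) = 0 := by simp [E1]
@[simp] lemma A_X0 : A (X 0) = X 0 := by simp [A]
@[simp] lemma A_X1 : A (X 1) = 1 - X 0 - X 1 := by simp [A]

lemma X0_dvd_sub_E0 (p : MvPolynomial (Fin 2) ℝ) : X 0 ∣ p - E0 p := by
  induction p using MvPolynomial.induction_on with
  | C a => simp [E0]
  | add p q hp hq =>
    rw [map_add]
    have : p + q - (E0 p + E0 q) = (p - E0 p) + (q - E0 q) := by ring
    rw [this]; exact dvd_add hp hq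
  | mul_X p i hp =>
    fin_cases i
    · show X 0 ∣ p * X 0 - E0 (p * X 0)
      rw [map_mul, E0_X0, mul_zero]
      exact Dvd.dvd.sub (Dvd.intro_left p rfl) (dvd_zero _)
    · show X 0 ∣ p * X 1 - E0 (p * X 1)
      rw [map_mul, E0_X1]
      have : p * X 1 - E0 p * X 1 = (p - E0 p) * X 1 := by ring
      rw [this]; exact hp.mul_right _

lemma X1_dvd_sub_E1 (p : MvPolynomial (Fin 2) ℝ) : X 1 ∣ p - E1 p := by
  induction p using MvPolynomial.induction_on with
  | C a => simp [E1]
  | add p q hp hq =>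
    rw [map_add]
    have : p + q - (E1 p + E1 q) = (p - E1 p) + (q - E1 q) := by ring
    rw [this]; exact dvd_add hp hq
  | mul_X p i hp =>
    fin_cases i
    · show X 1 ∣ p * X 0 - E1 (p * X 0)
      rw [map_mul, E1_X0]
      have : p * X 0 - E1 p * X 0 = (p - E1 p) * X 0 := by ring
      rw [this]; exact hp.mul_right _
    · show X 1 ∣ p * X 1 - E1 (p * X 1)
      rw [map_mul, E1_X1, mul_zero]
      exact Dvd.dvd.sub (Dvd.intro_left p rfl) (dvd_zero _)

lemma X0_dvd_of (p : MvPolynomial (Fin 2) ℝ) (h : E0 p = 0) : X 0 ∣ p := by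
  have := X0_dvd_sub_E0 p; rwa [h, sub_zero] at this

lemma X1_dvd_of (p : MvPolynomial (Fin 2) ℝ) (h : E1 p = 0) : X 1 ∣ p := by
  have := X1_dvd_sub_E1 p; rwa [h, sub_zero] at this

lemma A_A (r : MvPolynomial (Fin 2) ℝ) : A (A r) = r := by
  have h : A.comp A = AlgHom.id ℝ _ := by
    apply algHom_ext; intro i
    fin_cases i <;> simp [map_sub, map_one]
  calc A (A r) = (A.comp A) r := rfl
    _ = r := by rw [h]; rfl

lemma w_dvd_of (p : MvPolynomial (Fin 2) ℝ) (h : E1 (A p) = 0) :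
    (1 - X 0 - X 1) ∣ p := by
  obtain ⟨s, hs⟩ := X1_dvd_of (A p) h
  refine ⟨A s, ?_⟩
  have := congrArg A hs
  rwa [A_A, map_mul, A_X1] at this

noncomputable def ψ0 : MvPolynomial (Fin 2) ℝ →ₐ[ℝ] Polynomial ℝ := aeval ![0, Polynomial.X]
noncomputable def ψ1 : MvPolynomial (Fin 2) ℝ →ₐ[ℝ] Polynomial ℝ := aeval ![Polynomial.X, 0]
@[simp] lemma ψ0_X0 : ψ0 (X 0) = 0 := by simp [ψ0]
@[simp] lemma ψ0_X1 : ψ0 (X 1) = Polynomial.X := by simp [ψ0]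
@[simp] lemma ψ1_X0 : ψ1 (X 0) = Polynomial.X := by simp [ψ1]
@[simp] lemma ψ1_X1 : ψ1 (X 1) = 0 := by simp [ψ1]


lemma maeval_eq_eval (f : Fin 2 → ℝ) (r : MvPolynomial (Fin 2) ℝ) :
    aeval f r = eval f r := by
  rw [aeval_def, eval]; rfl

lemma eval_ψ1 (r : MvPolynomial (Fin 2) ℝ) (t : ℝ) :
    (ψ1 r).eval t = eval ![t, 0] r := by
  have h : (Polynomial.aeval t).comp ψ1 = (aeval ![t, (0:ℝ)]) := by
    apply algHom_ext; intro i
    fin_cases i <;> simp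
  have h2 := AlgHom.congr_fun h r
  simp only [AlgHom.comp_apply] at h2
  rw [maeval_eq_eval] at h2
  rw [← h2, Polynomial.coe_aeval_eq_eval]

lemma eval_ψ0 (r : MvPolynomial (Fin 2) ℝ) (t : ℝ) :
    (ψ0 r).eval t = eval ![0, t] r := by
  have h : (Polynomial.aeval t).comp ψ0 = (aeval ![(0:ℝ), t]) := by
    apply algHom_ext; intro i
    fin_cases i <;> simp
  have h2 := AlgHom.congr_fun h r
  simp only [AlgHom.comp_apply] at h2
  rw [maeval_eq_eval] at h2
  rw [← h2, Polynomial.coe_aeval_eq_eval]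

lemma ψ1_zero_of (r : MvPolynomial (Fin 2) ℝ)
    (h : ∀ t ∈ Set.Icc (0:ℝ) 1, eval ![t, 0] r = 0) : ψ1 r = 0 := by
  apply Polynomial.eq_zero_of_infinite_isRoot
  apply Set.Infinite.mono (s := Set.Icc (0:ℝ) 1)
  · intro t ht
    simp only [Set.mem_setOf_eq, Polynomial.IsRoot, eval_ψ1]
    exact h t ht
  · exact Set.Icc_infinite (by norm_num)

lemma ψ0_zero_of (r : MvPolynomial (Fin 2) ℝ)
    (h : ∀ t ∈ Set.Icc (0:ℝ) 1, eval ![0, t] r = 0) : ψ0 r = 0 := by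
  apply Polynomial.eq_zero_of_infinite_isRoot
  apply Set.Infinite.mono (s := Set.Icc (0:ℝ) 1)
  · intro t ht
    simp only [Set.mem_setOf_eq, Polynomial.IsRoot, eval_ψ0]
    exact h t ht
  · exact Set.Icc_infinite (by norm_num)

lemma E1_eq_comp (r : MvPolynomial (Fin 2) ℝ) :
    E1 r = Polynomial.aeval (X 0 : MvPolynomial (Fin 2) ℝ) (ψ1 r) := by
  have h : (Polynomial.aeval (X 0 : MvPolynomial (Fin 2) ℝ)).comp ψ1 = E1 := by
    apply algHom_ext; intro i
    fin_cases i <;> simp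
  exact (congrFun (congrArg (fun (f : MvPolynomial (Fin 2) ℝ →ₐ[ℝ] _) => (f : MvPolynomial (Fin 2) ℝ → _)) h) r).symm

lemma E0_eq_comp (r : MvPolynomial (Fin 2) ℝ) :
    E0 r = Polynomial.aeval (X 1 : MvPolynomial (Fin 2) ℝ) (ψ0 r) := by
  have h : (Polynomial.aeval (X 1 : MvPolynomial (Fin 2) ℝ)).comp ψ0 = E0 := by
    apply algHom_ext; intro i
    fin_cases i <;> simp
  exact (congrFun (congrArg (fun (f : MvPolynomial (Fin 2) ℝ →ₐ[ℝ] _) => (f : MvPolynomial (Fin 2) ℝ → _)) h) r).symm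

lemma eval_A (r : MvPolynomial (Fin 2) ℝ) (t : ℝ) :
    eval ![t, 0] (A r) = eval ![t, 1 - t] r := by
  have h : ((aeval ![t, (0:ℝ)]) : MvPolynomial (Fin 2) ℝ →ₐ[ℝ] ℝ).comp A = aeval ![t, 1 - t] := by
    apply algHom_ext; intro i
    fin_cases i <;> simp [map_sub, map_one]
  have h2 := AlgHom.congr_fun h r
  simp only [AlgHom.comp_apply] at h2
  rw [maeval_eq_eval, maeval_eq_eval] at h2
  exact h2

lemma deriv_ψ1 (p : MvPolynomial (Fin 2) ℝ) :
    Polynomial.derivative (ψ1 p) = ψ1 (pderiv 0 p) := by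
  induction p using MvPolynomial.induction_on with
  | C a => simp [ψ1]
  | add p q hp hq => simp [map_add, hp, hq]
  | mul_X p i hp =>
    fin_cases i
    · show Polynomial.derivative (ψ1 (p * X 0)) = ψ1 (pderiv 0 (p * X 0))
      rw [map_mul, ψ1_X0, Polynomial.derivative_mul, Polynomial.derivative_X, mul_one,
        hp, pderiv_mul, pderiv_X_self, mul_one, map_add, map_mul, ψ1_X0]
    · show Polynomial.derivative (ψ1 (p * X 1)) = ψ1 (pderiv 0 (p * X 1))
      rw [map_mul, ψ1_X1, mul_zero, Polynomial.derivative_zero, pderiv_mul,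
        pderiv_X_of_ne (by decide : (1 : Fin 2) ≠ 0), mul_zero, add_zero, map_mul, ψ1_X1, mul_zero]

lemma deriv_ψ0 (p : MvPolynomial (Fin 2) ℝ) :
    Polynomial.derivative (ψ0 p) = ψ0 (pderiv 1 p) := by
  induction p using MvPolynomial.induction_on with
  | C a => simp [ψ0]
  | add p q hp hq => simp [map_add, hp, hq]
  | mul_X p i hp =>
    fin_cases i
    · show Polynomial.derivative (ψ0 (p * X 0)) = ψ0 (pderiv 1 (p * X 0))
      rw [map_mul, ψ0_X0, mul_zero, Polynomial.derivative_zero, pderiv_mul,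
        pderiv_X_of_ne (by decide : (0 : Fin 2) ≠ 1), mul_zero, add_zero, map_mul, ψ0_X0, mul_zero]
    · show Polynomial.derivative (ψ0 (p * X 1)) = ψ0 (pderiv 1 (p * X 1))
      rw [map_mul, ψ0_X1, Polynomial.derivative_mul, Polynomial.derivative_X, mul_one,
        hp, pderiv_mul, pderiv_X_self, mul_one, map_add, map_mul, ψ0_X1]

lemma pderiv0_one_sub : pderiv 0 ((1 : MvPolynomial (Fin 2) ℝ) - X 0 - X 1) = -1 := by
  rw [map_sub, map_sub, pderiv_X_self, pderiv_X_of_ne (by decide : (1 : Fin 2) ≠ 0),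
    Derivation.map_one_eq_zero]
  ring

lemma pd0_A (p : MvPolynomial (Fin 2) ℝ) :
    pderiv 0 (A p) = A (pderiv 0 p) - A (pderiv 1 p) := by
  induction p using MvPolynomial.induction_on with
  | C a =>
    have : A (C a : MvPolynomial (Fin 2) ℝ) = C a := by simp [A]
    simp [this, pderiv_C]
  | add p q hp hq => simp only [map_add, hp, hq]; ring
  | mul_X p i hp =>
    fin_cases i
    · show pderiv 0 (A (p * X 0)) = A (pderiv 0 (p * X 0)) - A (pderiv 1 (p * X 0))
      rw [map_mul, A_X0, pderiv_mul, pderiv_X_self, hp,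
        pderiv_mul, pderiv_X_self, pderiv_mul, pderiv_X_of_ne (by decide : (0 : Fin 2) ≠ 1)]
      simp only [map_add, map_mul, map_zero, A_X0, mul_one, mul_zero, add_zero]
      ring
    · show pderiv 0 (A (p * X 1)) = A (pderiv 0 (p * X 1)) - A (pderiv 1 (p * X 1))
      rw [map_mul, A_X1, pderiv_mul, pderiv0_one_sub, hp,
        pderiv_mul, pderiv_X_of_ne (by decide : (1 : Fin 2) ≠ 0),
        pderiv_mul, pderiv_X_self]
      simp only [map_add, map_mul, map_zero, A_X1, mul_one, mul_zero, add_zero]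
      ring

lemma one_sub_X_ne (i : Fin 2) : (1 - X i : MvPolynomial (Fin 2) ℝ) ≠ 0 := by
  intro h
  have := congrArg constantCoeff h
  simp [map_sub, map_one, constantCoeff_X] at this

lemma dvd3 (r : MvPolynomial (Fin 2) ℝ) (h0 : E0 r = 0) (h1 : E1 r = 0)
    (hw : E1 (A r) = 0) :
    ∃ s, r = X 0 * (X 1 * ((1 - X 0 - X 1) * s)) := by
  obtain ⟨a, ha⟩ := X0_dvd_of r h0
  have h1a : E1 a = 0 := by
    have : (X 0 : MvPolynomial (Fin 2) ℝ) * E1 a = 0 := by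
      rw [← E1_X0, ← map_mul, ← ha, h1]
    rcases mul_eq_zero.mp this with h | h
    · exact absurd h (X_ne_zero 0)
    · exact h
  obtain ⟨b, hb⟩ := X1_dvd_of a h1a
  have hwb : E1 (A b) = 0 := by
    have : (X 0 : MvPolynomial (Fin 2) ℝ) * ((1 - X 0) * E1 (A b)) = 0 := by
      have hAr : A r = X 0 * ((1 - X 0 - X 1) * A b) := by
        rw [ha, hb, map_mul, map_mul, A_X0, A_X1]
      have : E1 (A r) = X 0 * ((1 - X 0) * E1 (A b)) := by
        rw [hAr, map_mul, map_mul, E1_X0, map_sub, map_sub, map_one, E1_X0, E1_X1]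
        ring
      rw [← this, hw]
    rcases mul_eq_zero.mp this with h | h
    · exact absurd h (X_ne_zero 0)
    · rcases mul_eq_zero.mp h with h' | h'
      · exact absurd h' (one_sub_X_ne 0)
      · exact h'
  obtain ⟨s, hs⟩ := w_dvd_of b hwb
  exact ⟨s, by rw [ha, hb, hs]⟩

lemma pderiv1_one_sub : pderiv 1 ((1 : MvPolynomial (Fin 2) ℝ) - X 0 - X 1) = -1 := by
  rw [map_sub, map_sub, pderiv_X_self, pderiv_X_of_ne (by decide : (0 : Fin 2) ≠ 1),
    Derivation.map_one_eq_zero]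
  ring

@[simp] lemma ψ1_C (a : ℝ) : ψ1 (C a) = Polynomial.C a := by simp [ψ1, algebraMap_eq]
@[simp] lemma ψ0_C (a : ℝ) : ψ0 (C a) = Polynomial.C a := by simp [ψ0, algebraMap_eq]
@[simp] lemma A_C (a : ℝ) : A (C a) = C a := by simp [A, algebraMap_eq]

end Stmt4Aux

open Stmt4Aux in
/-- A real polynomial in two variables whose gradient vanishes on the boundary of the
reference triangle with vertices `(0,0)`, `(1,0)`, `(0,1)` can be written as
`c + X²Y²(1−X−Y)² · q`. -/
theorem stmt_4 (p : MvPolynomial (Fin 2) ℝ)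
    (hgrad : ∀ t ∈ Set.Icc (0 : ℝ) 1,
      (eval ![t, 0] (pderiv 0 p) = 0 ∧ eval ![t, 0] (pderiv 1 p) = 0) ∧
      (eval ![(0 : ℝ), t] (pderiv 0 p) = 0 ∧ eval ![(0 : ℝ), t] (pderiv 1 p) = 0) ∧
      (eval ![t, 1 - t] (pderiv 0 p) = 0 ∧ eval ![t, 1 - t] (pderiv 1 p) = 0)) :
    ∃ (c : ℝ) (q : MvPolynomial (Fin 2) ℝ),
      p = C c + (X 0) ^ 2 * (X 1) ^ 2 * (1 - X 0 - X 1) ^ 2 * q := by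
  -- ψ-vanishing of the partial derivatives on the three edges
  have hp10 : ψ1 (pderiv 0 p) = 0 := ψ1_zero_of _ fun t ht => ((hgrad t ht).1).1
  have hp11 : ψ1 (pderiv 1 p) = 0 := ψ1_zero_of _ fun t ht => ((hgrad t ht).1).2
  have hp00 : ψ0 (pderiv 0 p) = 0 := ψ0_zero_of _ fun t ht => ((hgrad t ht).2.1).1
  have hp01 : ψ0 (pderiv 1 p) = 0 := ψ0_zero_of _ fun t ht => ((hgrad t ht).2.1).2
  have hw0 : ψ1 (A (pderiv 0 p)) = 0 :=
    ψ1_zero_of _ fun t ht => by rw [eval_A]; exact ((hgrad t ht).2.2).1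
  have hw1 : ψ1 (A (pderiv 1 p)) = 0 :=
    ψ1_zero_of _ fun t ht => by rw [eval_A]; exact ((hgrad t ht).2.2).2
  -- E-vanishing of the partial derivatives
  have hE1d0 : E1 (pderiv 0 p) = 0 := by rw [E1_eq_comp, hp10, map_zero]
  have hE1d1 : E1 (pderiv 1 p) = 0 := by rw [E1_eq_comp, hp11, map_zero]
  have hE0d0 : E0 (pderiv 0 p) = 0 := by rw [E0_eq_comp, hp00, map_zero]
  have hE0d1 : E0 (pderiv 1 p) = 0 := by rw [E0_eq_comp, hp01, map_zero]
  have hEwd0 : E1 (A (pderiv 0 p)) = 0 := by rw [E1_eq_comp, hw0, map_zero]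
  have hEwd1 : E1 (A (pderiv 1 p)) = 0 := by rw [E1_eq_comp, hw1, map_zero]
  obtain ⟨d0, hd0⟩ := dvd3 _ hE0d0 hE1d0 hEwd0
  obtain ⟨d1, hd1⟩ := dvd3 _ hE0d1 hE1d1 hEwd1
  -- p is constant (= c) on the three edges
  set c : ℝ := eval ![0, 0] p with hc
  have e1 : ψ1 p = Polynomial.C c := by
    have h := Polynomial.eq_C_of_derivative_eq_zero (p := ψ1 p) (by rw [deriv_ψ1, hp10])
    rw [h, Polynomial.coeff_zero_eq_eval_zero, eval_ψ1]
  have e0 : ψ0 p = Polynomial.C c := by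
    have h := Polynomial.eq_C_of_derivative_eq_zero (p := ψ0 p) (by rw [deriv_ψ0, hp01])
    rw [h, Polynomial.coeff_zero_eq_eval_zero, eval_ψ0]
  have eA : ψ1 (A p) = Polynomial.C c := by
    have hder : Polynomial.derivative (ψ1 (A p)) = 0 := by
      rw [deriv_ψ1, pd0_A, map_sub, hw0, hw1, sub_zero]
    have h := Polynomial.eq_C_of_derivative_eq_zero hder
    rw [h, Polynomial.coeff_zero_eq_eval_zero, eval_ψ1]
    have : eval ![(0:ℝ), 0] (A p) = eval ![(0:ℝ), 1 - 0] p := eval_A p 0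
    norm_num at this
    rw [this]
    have h01 : eval ![(0:ℝ), 1] p = (ψ0 p).eval 1 := (eval_ψ0 p 1).symm
    rw [h01, e0, Polynomial.eval_C]
  -- r := p - C c vanishes on the three lines
  have hE1r : E1 (p - C c) = 0 := by
    rw [E1_eq_comp, map_sub, e1, ψ1_C, sub_self, map_zero]
  have hE0r : E0 (p - C c) = 0 := by
    rw [E0_eq_comp, map_sub, e0, ψ0_C, sub_self, map_zero]
  have hEwr : E1 (A (p - C c)) = 0 := by
    rw [E1_eq_comp, map_sub, A_C, map_sub, eA, ψ1_C, sub_self, map_zero]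
  obtain ⟨q3, hq3⟩ := dvd3 _ hE0r hE1r hEwr
  -- derivatives of r
  have hpd0r : pderiv 0 (p - C c) = pderiv 0 p := by rw [map_sub, pderiv_C, sub_zero]
  have hpd1r : pderiv 1 (p - C c) = pderiv 1 p := by rw [map_sub, pderiv_C, sub_zero]
  -- expansion of the derivative of the product
  have expand0 : pderiv 0 (X 0 * (X 1 * ((1 - X 0 - X 1) * q3)))
      = X 1 * (((1 - X 0 - X 1) - X 0) * q3)
        + X 0 * (X 1 * ((1 - X 0 - X 1) * pderiv 0 q3)) := by
    rw [pderiv_mul, pderiv_X_self, pderiv_mul,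
      pderiv_X_of_ne (by decide : (1 : Fin 2) ≠ 0), pderiv_mul, pderiv0_one_sub]
    ring
  have expand1 : pderiv 1 (X 0 * (X 1 * ((1 - X 0 - X 1) * q3)))
      = X 0 * (((1 - X 0 - X 1) - X 1) * q3)
        + X 0 * (X 1 * ((1 - X 0 - X 1) * pderiv 1 q3)) := by
    rw [pderiv_mul, pderiv_X_of_ne (by decide : (0 : Fin 2) ≠ 1), pderiv_mul,
      pderiv_X_self, pderiv_mul, pderiv1_one_sub]
    ring
  -- key cancelled equations
  have hcan0 : ((1 - X 0 - X 1) - X 0) * q3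
      = X 0 * ((1 - X 0 - X 1) * (d0 - pderiv 0 q3)) := by
    apply mul_left_cancel₀ (X_ne_zero (R := ℝ) 1)
    have h := hpd0r
    rw [hq3] at h
    rw [expand0, hd0] at h
    linear_combination h
  have hcan1 : ((1 - X 0 - X 1) - X 1) * q3
      = X 1 * ((1 - X 0 - X 1) * (d1 - pderiv 1 q3)) := by
    apply mul_left_cancel₀ (X_ne_zero (R := ℝ) 0)
    have h := hpd1r
    rw [hq3] at h
    rw [expand1, hd1] at h
    linear_combination h
  -- E-conditions on q3
  have hE0q3 : E0 q3 = 0 := by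
    have h := congrArg E0 hcan0
    rw [map_mul, map_mul, E0_X0, zero_mul, map_sub, map_sub, map_sub, map_one,
      E0_X0, E0_X1] at h
    have h' : ((1 : MvPolynomial (Fin 2) ℝ) - X 1) * E0 q3 = 0 := by linear_combination h
    rcases mul_eq_zero.mp h' with h'' | h''
    · exact absurd h'' (one_sub_X_ne 1)
    · exact h''
  have hE1q3 : E1 q3 = 0 := by
    have h := congrArg E1 hcan1
    rw [map_mul, map_mul, E1_X1, zero_mul, map_sub, map_sub, map_sub, map_one,
      E1_X0, E1_X1] at h
    have h' : ((1 : MvPolynomial (Fin 2) ℝ) - X 0) * E1 q3 = 0 := by linear_combination h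
    rcases mul_eq_zero.mp h' with h'' | h''
    · exact absurd h'' (one_sub_X_ne 0)
    · exact h''
  have hEwq3 : E1 (A q3) = 0 := by
    have h := congrArg (fun z => E1 (A z)) hcan0
    simp only [map_mul, map_sub, map_one, A_X0, A_X1, E1_X0, E1_X1] at h
    have h' : (X 0 : MvPolynomial (Fin 2) ℝ) * E1 (A q3) = 0 := by linear_combination -h
    rcases mul_eq_zero.mp h' with h'' | h''
    · exact absurd h'' (X_ne_zero 0)
    · exact h''
  obtain ⟨q, hq⟩ := dvd3 _ hE0q3 hE1q3 hEwq3
  refine ⟨c, q, ?_⟩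
  have := hq3
  rw [hq] at this
  linear_combination this
end

section
/- Let A, B, C ∈ ℝ² be the vertices of a nondegenerate triangle, and suppose every interior angle of the triangle is at most θ̄, where 2π/3 ≤ θ̄ < π. Let h_min and h_max denote the lengths of the shortest and longest sides of the triangle, and let |K| denote its area. Then |K| ≥ (1/4) · sin(θ̄) · h_min · h_max. -/
open Real EuclideanGeometry

lemma area_det_aux (A B C : EuclideanSpace ℝ (Fin 2)) :
    Real.sin (EuclideanGeometry.angle B A C) * (dist B A * dist C A) =
      |(B 0 - A 0) * (C 1 - A 1) - (B 1 - A 1) * (C 0 - A 0)| := by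
  have hinner : ∀ u v : EuclideanSpace ℝ (Fin 2),
      (inner ℝ u v : ℝ) = u 0 * v 0 + u 1 * v 1 := by
    intro u v
    simp [PiLp.inner_apply, Fin.sum_univ_two, RCLike.inner_apply, mul_comm]
  rw [EuclideanGeometry.angle, vsub_eq_sub, vsub_eq_sub, dist_eq_norm, dist_eq_norm,
    InnerProductGeometry.sin_angle_mul_norm_mul_norm, hinner, hinner, hinner]
  simp only [PiLp.sub_apply]
  rw [show ((B 0 - A 0) * (B 0 - A 0) + (B 1 - A 1) * (B 1 - A 1)) *
        ((C 0 - A 0) * (C 0 - A 0) + (C 1 - A 1) * (C 1 - A 1)) -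
      ((B 0 - A 0) * (C 0 - A 0) + (B 1 - A 1) * (C 1 - A 1)) *
        ((B 0 - A 0) * (C 0 - A 0) + (B 1 - A 1) * (C 1 - A 1)) =
      ((B 0 - A 0) * (C 1 - A 1) - (B 1 - A 1) * (C 0 - A 0))^2 by ring, Real.sqrt_sq_eq_abs]

lemma sin_lower_aux (θ ψ : ℝ) (hθl : 2 * π / 3 ≤ θ) (hθu : θ < π)
    (h1 : (π - θ)/2 ≤ ψ) (h2 : ψ ≤ θ) : Real.sin θ / 2 ≤ Real.sin ψ := by
  have hπ := Real.pi_pos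
  rcases le_or_gt ψ (π/2) with hc | hc
  · have hmono : Real.sin ((π - θ)/2) ≤ Real.sin ψ :=
      Real.strictMonoOn_sin.monotoneOn ⟨by linarith, by linarith⟩ ⟨by linarith, hc⟩ h1
    rw [show (π - θ)/2 = π/2 - θ/2 by ring, Real.sin_pi_div_two_sub] at hmono
    have h2m : Real.sin (2 * (θ/2)) = 2 * Real.sin (θ/2) * Real.cos (θ/2) := Real.sin_two_mul _
    rw [show 2 * (θ/2) = θ by ring] at h2m
    have hs1 : Real.sin (θ/2) ≤ 1 := Real.sin_le_one _
    have hc0 : 0 ≤ Real.cos (θ/2) := Real.cos_nonneg_of_mem_Icc ⟨by linarith, by linarith⟩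
    nlinarith
  · have hmono : Real.sin (π - θ) ≤ Real.sin (π - ψ) :=
      Real.strictMonoOn_sin.monotoneOn ⟨by linarith, by linarith⟩ ⟨by linarith, by linarith⟩
        (by linarith)
    rw [Real.sin_pi_sub, Real.sin_pi_sub] at hmono
    have : 0 ≤ Real.sin θ := Real.sin_nonneg_of_nonneg_of_le_pi (by linarith) hθu.le
    linarith

lemma key_aux (θ x y z ξ ψ ζ e : ℝ) (hx : 0 < x) (hxy : x ≤ y) (hyz : y ≤ z)
    (hsum : ξ + ψ + ζ = π) (hξ : 0 < ξ) (hψ : 0 < ψ) (hζ : 0 < ζ)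
    (hψθ : ψ ≤ θ) (hζθ : ζ ≤ θ) (hθl : 2 * π / 3 ≤ θ) (hθu : θ < π)
    (he1 : e = y * z * Real.sin ξ) (he2 : e = x * z * Real.sin ψ) :
    Real.sin θ / 2 * (x * z) ≤ e := by
  have hπ := Real.pi_pos
  have hz : 0 < z := lt_of_lt_of_le hx (hxy.trans hyz)
  have hsξ : 0 ≤ Real.sin ξ := Real.sin_nonneg_of_nonneg_of_le_pi hξ.le (by linarith)
  have hys : y * Real.sin ξ = x * Real.sin ψ :=
    mul_right_cancel₀ hz.ne' (by linear_combination he2 - he1)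
  have hsins : Real.sin ξ ≤ Real.sin ψ := by nlinarith
  have hβlow : (π - θ)/2 ≤ ψ := by
    by_contra h; push_neg at h
    have hξ_big : (π - θ)/2 < ξ := by linarith
    rcases le_or_gt ξ (π/2) with hcc | hcc
    · have : Real.sin ψ < Real.sin ξ :=
        Real.strictMonoOn_sin ⟨by linarith, by linarith⟩ ⟨by linarith, hcc⟩ (by linarith)
      linarith
    · have hs : Real.sin (π - ξ) ≤ Real.sin ψ := by rw [Real.sin_pi_sub]; exact hsins
      have h2 : π - ξ ≤ ψ := by
        by_contra h3; push_neg at h3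
        have := Real.strictMonoOn_sin ⟨by linarith, by linarith⟩
          ⟨by linarith, by linarith⟩ h3
        rw [Real.sin_pi_sub] at this
        linarith
      linarith
  have hsl := sin_lower_aux θ ψ hθl hθu hβlow hψθ
  nlinarith [mul_pos hx hz]

lemma case_step_aux (θ x y z ξ ψ ζ e m M : ℝ) (hx : 0 < x) (hxy : x ≤ y) (hyz : y ≤ z)
    (hsum : ξ + ψ + ζ = π) (hξ : 0 < ξ) (hψ : 0 < ψ) (hζ : 0 < ζ)
    (hψθ : ψ ≤ θ) (hζθ : ζ ≤ θ) (hθl : 2 * π / 3 ≤ θ) (hθu : θ < π)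
    (he1 : e = y * z * Real.sin ξ) (he2 : e = x * z * Real.sin ψ)
    (hm : m ≤ x) (hM : M ≤ z) (hm0 : 0 ≤ m) (hM0 : 0 ≤ M) :
    (1/4) * Real.sin θ * m * M ≤ (1/2) * e := by
  have hπ := Real.pi_pos
  have hk := key_aux θ x y z ξ ψ ζ e hx hxy hyz hsum hξ hψ hζ hψθ hζθ hθl hθu he1 he2
  have hsθ : 0 ≤ Real.sin θ := Real.sin_nonneg_of_nonneg_of_le_pi (by linarith) hθu.le
  have h1 : m * M ≤ x * z := mul_le_mul hm hM hM0 hx.le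
  nlinarith [mul_le_mul_of_nonneg_left h1 hsθ]

/-- Area lower bound for a triangle satisfying a maximum angle condition: if all
interior angles are at most `θ` with `2π/3 ≤ θ < π`, then
`|K| ≥ (1/4) · sin θ · h_min · h_max`. -/
theorem stmt_7 (A B C : EuclideanSpace ℝ (Fin 2))
    (hnd : ¬ Collinear ℝ ({A, B, C} : Set (EuclideanSpace ℝ (Fin 2))))
    (θ : ℝ) (hθl : 2 * π / 3 ≤ θ) (hθu : θ < π)
    (hA : EuclideanGeometry.angle B A C ≤ θ)
    (hB : EuclideanGeometry.angle A B C ≤ θ)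
    (hC : EuclideanGeometry.angle A C B ≤ θ) :
    (1/4) * Real.sin θ * (min (dist A B) (min (dist B C) (dist C A))) *
        (max (dist A B) (max (dist B C) (dist C A))) ≤
      (1/2) * |(B 0 - A 0) * (C 1 - A 1) - (B 1 - A 1) * (C 0 - A 0)| := by
  have hnd1 : ¬Collinear ℝ ({B, A, C} : Set (EuclideanSpace ℝ (Fin 2))) := by
    rwa [Set.insert_comm]
  have hnd2 : ¬Collinear ℝ ({A, C, B} : Set (EuclideanSpace ℝ (Fin 2))) := by
    rwa [Set.pair_comm C B]
  have hAB : A ≠ B := by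
    rintro rfl; exact hnd (by simpa using collinear_pair ℝ A C)
  have hAC : A ≠ C := by
    rintro rfl; exact hnd2 (by simpa using collinear_pair ℝ A B)
  have hBC : B ≠ C := by
    rintro rfl; exact hnd1 (by simpa using collinear_pair ℝ A B)
  have hα : 0 < EuclideanGeometry.angle B A C :=
    EuclideanGeometry.angle_pos_of_not_collinear hnd1
  have hβ : 0 < EuclideanGeometry.angle A B C :=
    EuclideanGeometry.angle_pos_of_not_collinear hnd
  have hγ : 0 < EuclideanGeometry.angle A C B :=
    EuclideanGeometry.angle_pos_of_not_collinear hnd2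
  have hsum : EuclideanGeometry.angle B A C + EuclideanGeometry.angle A B C +
      EuclideanGeometry.angle A C B = π := by
    have h := EuclideanGeometry.angle_add_angle_add_angle_eq_pi (p₁ := C) (p₂ := A) B
      hAC
    rw [EuclideanGeometry.angle_comm C A B, EuclideanGeometry.angle_comm B C A] at h
    linarith
  set D := |(B 0 - A 0) * (C 1 - A 1) - (B 1 - A 1) * (C 0 - A 0)| with hD
  have ha : 0 < dist B C := dist_pos.mpr hBC
  have hb : 0 < dist C A := dist_pos.mpr hAC.symm
  have hc : 0 < dist A B := dist_pos.mpr hAB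
  have e1 : D = dist C A * dist A B * Real.sin (EuclideanGeometry.angle B A C) := by
    have h := area_det_aux A B C
    rw [hD, ← h, dist_comm B A]; ring
  have e2 : D = dist B C * dist A B * Real.sin (EuclideanGeometry.angle A B C) := by
    have h := area_det_aux B A C
    have habs : |(A 0 - B 0) * (C 1 - B 1) - (A 1 - B 1) * (C 0 - B 0)| =
        |(B 0 - A 0) * (C 1 - A 1) - (B 1 - A 1) * (C 0 - A 0)| := by
      rw [show (A 0 - B 0) * (C 1 - B 1) - (A 1 - B 1) * (C 0 - B 0) =
        -((B 0 - A 0) * (C 1 - A 1) - (B 1 - A 1) * (C 0 - A 0)) by ring, abs_neg]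
    rw [habs] at h
    rw [hD, ← h, dist_comm C B]; ring
  have e3 : D = dist B C * dist C A * Real.sin (EuclideanGeometry.angle A C B) := by
    have h := area_det_aux C A B
    have habs : |(A 0 - C 0) * (B 1 - C 1) - (A 1 - C 1) * (B 0 - C 0)| =
        |(B 0 - A 0) * (C 1 - A 1) - (B 1 - A 1) * (C 0 - A 0)| := by
      rw [show (A 0 - C 0) * (B 1 - C 1) - (A 1 - C 1) * (B 0 - C 0) =
        (B 0 - A 0) * (C 1 - A 1) - (B 1 - A 1) * (C 0 - A 0) by ring]
    rw [habs] at h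
    rw [hD, ← h, dist_comm A C]; ring
  have hm0 : (0:ℝ) ≤ min (dist A B) (min (dist B C) (dist C A)) :=
    le_min hc.le (le_min ha.le hb.le)
  have hM0 : (0:ℝ) ≤ max (dist A B) (max (dist B C) (dist C A)) :=
    hc.le.trans (le_max_left _ _)
  have hma : min (dist A B) (min (dist B C) (dist C A)) ≤ dist B C :=
    (min_le_right _ _).trans (min_le_left _ _)
  have hmb : min (dist A B) (min (dist B C) (dist C A)) ≤ dist C A :=
    (min_le_right _ _).trans (min_le_right _ _)
  have hmc : min (dist A B) (min (dist B C) (dist C A)) ≤ dist A B := min_le_left _ _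
  rcases le_total (dist B C) (dist C A) with hab | hab <;>
    rcases le_total (dist C A) (dist A B) with hbc | hbc <;>
    rcases le_total (dist B C) (dist A B) with hac | hac
  · exact case_step_aux θ (dist B C) (dist C A) (dist A B)
      (EuclideanGeometry.angle B A C) (EuclideanGeometry.angle A B C)
      (EuclideanGeometry.angle A C B) D _ _ ha hab hbc hsum hα hβ hγ hB hC hθl hθu
      (by linear_combination e1) (by linear_combination e2) hma
      (max_le le_rfl (max_le hac hbc)) hm0 hM0
  · exact case_step_aux θ (dist B C) (dist C A) (dist A B)
      (EuclideanGeometry.angle B A C) (EuclideanGeometry.angle A B C)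
      (EuclideanGeometry.angle A C B) D _ _ ha hab hbc hsum hα hβ hγ hB hC hθl hθu
      (by linear_combination e1) (by linear_combination e2) hma
      (max_le le_rfl (max_le (hab.trans hbc) hbc)) hm0 hM0
  · exact case_step_aux θ (dist B C) (dist A B) (dist C A)
      (EuclideanGeometry.angle B A C) (EuclideanGeometry.angle A C B)
      (EuclideanGeometry.angle A B C) D _ _ ha hac hbc (by linarith) hα hγ hβ hC hB hθl hθu
      (by linear_combination e1) (by linear_combination e3) hma
      (max_le hbc (max_le hab le_rfl)) hm0 hM0
  · exact case_step_aux θ (dist A B) (dist B C) (dist C A)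
      (EuclideanGeometry.angle A C B) (EuclideanGeometry.angle B A C)
      (EuclideanGeometry.angle A B C) D _ _ hc hac hab (by linarith) hγ hα hβ hA hB hθl hθu
      (by linear_combination e3) (by linear_combination e1) hmc
      (max_le hbc (max_le hab le_rfl)) hm0 hM0
  · exact case_step_aux θ (dist C A) (dist B C) (dist A B)
      (EuclideanGeometry.angle A B C) (EuclideanGeometry.angle B A C)
      (EuclideanGeometry.angle A C B) D _ _ hb hab hac (by linarith) hβ hα hγ hA hC hθl hθu
      (by linear_combination e2) (by linear_combination e1) hmb
      (max_le le_rfl (max_le hac hbc)) hm0 hM0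
  · exact case_step_aux θ (dist C A) (dist A B) (dist B C)
      (EuclideanGeometry.angle A B C) (EuclideanGeometry.angle A C B)
      (EuclideanGeometry.angle B A C) D _ _ hb hbc hac (by linarith) hβ hγ hα hC hA hθl hθu
      (by linear_combination e2) (by linear_combination e3) hmb
      (max_le hac (max_le le_rfl (hbc.trans hac))) hm0 hM0
  · exact case_step_aux θ (dist A B) (dist C A) (dist B C)
      (EuclideanGeometry.angle A C B) (EuclideanGeometry.angle A B C)
      (EuclideanGeometry.angle B A C) D _ _ hc hbc hab (by linarith) hγ hβ hα hB hA hθl hθu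
      (by linear_combination e3) (by linear_combination e2) hmc
      (max_le (hbc.trans hab) (max_le le_rfl hab)) hm0 hM0
  · exact case_step_aux θ (dist A B) (dist C A) (dist B C)
      (EuclideanGeometry.angle A C B) (EuclideanGeometry.angle A B C)
      (EuclideanGeometry.angle B A C) D _ _ hc hbc hab (by linarith) hγ hβ hα hB hA hθl hθu
      (by linear_combination e3) (by linear_combination e2) hmc
      (max_le (hbc.trans hab) (max_le le_rfl hab)) hm0 hM0
end

section
/- Let p be a real polynomial in two variables X, Y of total degree at most 5 such that the gradient of p vanishes at every point of the boundary of the reference triangle with vertices (0,0), (1,0), (0,1). Then, writing c = p(0,0), the polynomial p − c is divisible by X²Y²(1−X−Y)² in ℝ[X,Y]; and since any nonzero multiple of X²Y²(1−X−Y)² has total degree at least 6, it follows that p = c is constant. -/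
open MvPolynomial
open MvPolynomial

lemma eval_aeval2 (v : Fin 2 → Polynomial ℝ) (f : MvPolynomial (Fin 2) ℝ) (t : ℝ) :
    Polynomial.eval t (aeval v f) = eval (fun i => (v i).eval t) f := by
  induction f using MvPolynomial.induction_on with
  | C a => simp
  | add f g hf hg => simp [hf, hg]
  | mul_X f i hf => simp [hf]

lemma coeff_pderiv2 (i : Fin 2) (f : MvPolynomial (Fin 2) ℝ) (m : Fin 2 →₀ ℕ) :
    coeff m (pderiv i f) = (m i + 1) * coeff (m + Finsupp.single i 1) f := by
  induction f using MvPolynomial.induction_on' with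
  | add f g hf hg => simp [hf, hg, mul_add]
  | monomial s a =>
    rw [pderiv_monomial, coeff_monomial, coeff_monomial]
    split_ifs with h1 h2 h2
    · subst h2
      rw [add_tsub_cancel_right] at h1
      simp [Finsupp.add_apply, Finsupp.single_apply, mul_comm]
    · have hsi : s i = 0 := by
        by_contra h0
        apply h2
        rw [← h1, tsub_add_cancel_of_le (Finsupp.single_le_iff.mpr (by omega))]
      simp [hsi]
    · exfalso; apply h1; rw [h2, add_tsub_cancel_right]
    · ring
open MvPolynomial

lemma single_eq_iff2 (i0 : Fin 2) (s : Fin 2 →₀ ℕ) (n : ℕ) (i1 : Fin 2) (h01 : i0 ≠ i1) :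
    s = Finsupp.single i0 n ↔ (s i0 = n ∧ s i1 = 0) := by
  constructor
  · rintro rfl; simp [Finsupp.single_apply, h01, h01.symm]
  · rintro ⟨h0, h1⟩
    ext j
    have : j = i0 ∨ j = i1 := by omega
    rcases this with rfl | rfl <;> simp [Finsupp.single_apply, h0, h1, h01, h01.symm]

lemma coeff_aeval_b (f : MvPolynomial (Fin 2) ℝ) (n : ℕ) :
    (aeval ![Polynomial.X, 0] f : Polynomial ℝ).coeff n = f.coeff (Finsupp.single 0 n) := by
  induction f using MvPolynomial.induction_on' with
  | add f g hf hg => simp [hf, hg]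
  | monomial s a =>
    rw [aeval_monomial, coeff_monomial, Finsupp.prod_pow]
    rw [Fin.prod_univ_two]
    simp only [Matrix.cons_val_zero, Matrix.cons_val_one, Matrix.head_cons]
    simp only [single_eq_iff2 0 s n 1 (by omega)]
    rcases Nat.eq_zero_or_pos (s 1) with h1 | h1
    · rw [h1, pow_zero, mul_one]
      have : (algebraMap ℝ (Polynomial ℝ)) a = Polynomial.C a := rfl
      rw [this, Polynomial.coeff_C_mul, Polynomial.coeff_X_pow]
      by_cases h0 : s 0 = n <;> simp [h0, h1]
      intro h; omega
    · rw [zero_pow (by omega), mul_zero, mul_zero]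
      have : ¬ (s 0 = n ∧ s 1 = 0) := by omega
      simp [this]

lemma coeff_aeval_l (f : MvPolynomial (Fin 2) ℝ) (n : ℕ) :
    (aeval ![0, Polynomial.X] f : Polynomial ℝ).coeff n = f.coeff (Finsupp.single 1 n) := by
  induction f using MvPolynomial.induction_on' with
  | add f g hf hg => simp [hf, hg]
  | monomial s a =>
    rw [aeval_monomial, coeff_monomial, Finsupp.prod_pow]
    rw [Fin.prod_univ_two]
    simp only [Matrix.cons_val_zero, Matrix.cons_val_one, Matrix.head_cons]
    simp only [single_eq_iff2 1 s n 0 (by omega)]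
    rcases Nat.eq_zero_or_pos (s 0) with h1 | h1
    · rw [h1, pow_zero, one_mul]
      have : (algebraMap ℝ (Polynomial ℝ)) a = Polynomial.C a := rfl
      rw [this, Polynomial.coeff_C_mul, Polynomial.coeff_X_pow]
      by_cases h0 : s 1 = n <;> simp [h0, h1]
      intro h; omega
    · rw [zero_pow (by omega), zero_mul, mul_zero]
      have : ¬ (s 1 = n ∧ s 0 = 0) := by omega
      simp [this]

lemma fs_eq2 (i j k l : ℕ) :
    (Finsupp.single (0:Fin 2) i + Finsupp.single 1 j
      = Finsupp.single 0 k + Finsupp.single 1 l) ↔ (i = k ∧ j = l) := by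
  constructor
  · intro h
    constructor
    · have := congrFun (congrArg (fun f : Fin 2 →₀ ℕ => (f : Fin 2 → ℕ)) h) 0
      simpa using this
    · have := congrFun (congrArg (fun f : Fin 2 →₀ ℕ => (f : Fin 2 → ℕ)) h) 1
      simpa using this
  · rintro ⟨rfl, rfl⟩; rfl

lemma hsum2 (i j : ℕ) :
    ∑ k ∈ ((Finsupp.single 0 i + Finsupp.single 1 j : Fin 2 →₀ ℕ)).support,
      (Finsupp.single 0 i + Finsupp.single 1 j : Fin 2 →₀ ℕ) k = i + j := by
  rw [Finset.sum_subset (Finset.subset_univ _)]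
  · rw [Fin.sum_univ_two]; simp [Finsupp.single_apply]
  · intro x _ hx; simpa using Finsupp.notMem_support_iff.mp hx

/-- For a `P₅` polynomial whose gradient vanishes on the boundary of the reference
triangle, with `c = p(0,0)`, the polynomial `p − c` is divisible by
`X²Y²(1−X−Y)²` in `ℝ[X,Y]`, and consequently `p = c` is constant. -/
theorem stmt_11 (p : MvPolynomial (Fin 2) ℝ)
    (hdeg : p.totalDegree ≤ 5)
    (hgrad : ∀ t ∈ Set.Icc (0 : ℝ) 1,
      (eval ![t, 0] (pderiv 0 p) = 0 ∧ eval ![t, 0] (pderiv 1 p) = 0) ∧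
      (eval ![(0 : ℝ), t] (pderiv 0 p) = 0 ∧ eval ![(0 : ℝ), t] (pderiv 1 p) = 0) ∧
      (eval ![t, 1 - t] (pderiv 0 p) = 0 ∧ eval ![t, 1 - t] (pderiv 1 p) = 0)) :
    ((X 0) ^ 2 * (X 1) ^ 2 * (1 - X 0 - X 1) ^ 2 ∣ p - C (eval ![(0:ℝ), 0] p)) ∧
      p = C (eval ![(0:ℝ), 0] p) := by
  have hic : (Set.Icc (0:ℝ) 1).Infinite := Set.Icc_infinite (by norm_num)
  have hvb : ∀ t : ℝ, (fun i => Polynomial.eval t (![Polynomial.X, 0] i)) = ![t, 0] := by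
    intro t; funext i; fin_cases i <;> simp
  have hvl : ∀ t : ℝ, (fun i => Polynomial.eval t (![0, Polynomial.X] i)) = ![(0:ℝ), t] := by
    intro t; funext i; fin_cases i <;> simp
  have hb0 : (aeval ![Polynomial.X, 0] (pderiv 0 p) : Polynomial ℝ) = 0 := by
    apply Polynomial.eq_zero_of_infinite_isRoot
    apply hic.mono
    intro t ht
    simp only [Set.mem_setOf_eq, Polynomial.IsRoot, eval_aeval2, hvb t]
    exact ((hgrad t ht).1).1
  have hb1 : (aeval ![Polynomial.X, 0] (pderiv 1 p) : Polynomial ℝ) = 0 := by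
    apply Polynomial.eq_zero_of_infinite_isRoot
    apply hic.mono
    intro t ht
    simp only [Set.mem_setOf_eq, Polynomial.IsRoot, eval_aeval2, hvb t]
    exact ((hgrad t ht).1).2
  have hl0 : (aeval ![0, Polynomial.X] (pderiv 0 p) : Polynomial ℝ) = 0 := by
    apply Polynomial.eq_zero_of_infinite_isRoot
    apply hic.mono
    intro t ht
    simp only [Set.mem_setOf_eq, Polynomial.IsRoot, eval_aeval2, hvl t]
    exact ((hgrad t ht).2.1).1
  have hl1 : (aeval ![0, Polynomial.X] (pderiv 1 p) : Polynomial ℝ) = 0 := by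
    apply Polynomial.eq_zero_of_infinite_isRoot
    apply hic.mono
    intro t ht
    simp only [Set.mem_setOf_eq, Polynomial.IsRoot, eval_aeval2, hvl t]
    exact ((hgrad t ht).2.1).2
  -- coefficient consequences
  have hA : ∀ n : ℕ, coeff (Finsupp.single 0 (n+1)) p = 0 := by
    intro n
    have h := coeff_pderiv2 0 (p) (Finsupp.single 0 n)
    rw [← coeff_aeval_b, hb0] at h
    simp only [Polynomial.coeff_zero] at h
    rw [← Finsupp.single_add] at h
    rcases mul_eq_zero.mp h.symm with h' | h'
    · exact absurd h' (Nat.cast_add_one_ne_zero _)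
    · exact h'
  have hB : ∀ n : ℕ, coeff (Finsupp.single 0 n + Finsupp.single 1 1) p = 0 := by
    intro n
    have h := coeff_pderiv2 1 p (Finsupp.single 0 n)
    rw [← coeff_aeval_b, hb1] at h
    simp only [Polynomial.coeff_zero] at h
    rcases mul_eq_zero.mp h.symm with h' | h'
    · exact absurd h' (Nat.cast_add_one_ne_zero _)
    · exact h'
  have hC : ∀ n : ℕ, coeff (Finsupp.single 1 (n+1)) p = 0 := by
    intro n
    have h := coeff_pderiv2 1 p (Finsupp.single 1 n)
    rw [← coeff_aeval_l, hl1] at h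
    simp only [Polynomial.coeff_zero] at h
    rw [← Finsupp.single_add] at h
    rcases mul_eq_zero.mp h.symm with h' | h'
    · exact absurd h' (Nat.cast_add_one_ne_zero _)
    · exact h'
  have hD : ∀ n : ℕ, coeff (Finsupp.single 0 1 + Finsupp.single 1 n) p = 0 := by
    intro n
    have h := coeff_pderiv2 0 p (Finsupp.single 1 n)
    rw [← coeff_aeval_l, hl0] at h
    simp only [Polynomial.coeff_zero] at h
    rcases mul_eq_zero.mp h.symm with h' | h'
    · exact absurd h' (Nat.cast_add_one_ne_zero _)
    · rw [add_comm]; exact h'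
  -- master vanishing fact
  have hZ : ∀ i j : ℕ, ¬(i = 0 ∧ j = 0) → ¬(i = 2 ∧ j = 2) → ¬(i = 2 ∧ j = 3) →
      ¬(i = 3 ∧ j = 2) → coeff (Finsupp.single 0 i + Finsupp.single 1 j) p = 0 := by
    intro i j h00 h22 h23 h32
    by_cases hij : 5 < i + j
    · exact coeff_eq_zero_of_totalDegree_lt (by rw [hsum2 i j]; omega)
    · have hcase : (j = 0 ∧ 1 ≤ i) ∨ (i = 0 ∧ 1 ≤ j) ∨ j = 1 ∨ i = 1 := by omega
      rcases hcase with ⟨rfl, hi⟩ | ⟨rfl, hj⟩ | rfl | rfl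
      · obtain ⟨n, rfl⟩ : ∃ n, i = n + 1 := ⟨i - 1, by omega⟩
        simpa using hA n
      · obtain ⟨n, rfl⟩ : ∃ n, j = n + 1 := ⟨j - 1, by omega⟩
        simpa using hC n
      · exact hB i
      · exact hD j
  set c : ℝ := coeff 0 p with hc
  set a : ℝ := coeff (Finsupp.single 0 2 + Finsupp.single 1 2) p with ha
  set b : ℝ := coeff (Finsupp.single 0 2 + Finsupp.single 1 3) p with hb
  set d : ℝ := coeff (Finsupp.single 0 3 + Finsupp.single 1 2) p with hd
  have h00 : (0 : Fin 2 →₀ ℕ) = Finsupp.single 0 0 + Finsupp.single 1 0 := by simp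
  have hp : p = C c + monomial (Finsupp.single 0 2 + Finsupp.single 1 2) a
      + monomial (Finsupp.single 0 2 + Finsupp.single 1 3) b
      + monomial (Finsupp.single 0 3 + Finsupp.single 1 2) d := by
    ext m
    obtain ⟨i, j, rfl⟩ : ∃ i j, m = Finsupp.single 0 i + Finsupp.single 1 j :=
      ⟨m 0, m 1, by ext k; fin_cases k <;> simp [Finsupp.single_apply]⟩
    rw [C_apply, h00]
    simp only [coeff_add, coeff_monomial, fs_eq2]
    by_cases c00 : i = 0 ∧ j = 0
    · obtain ⟨rfl, rfl⟩ := c00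
      norm_num [hc]
    · by_cases c22 : i = 2 ∧ j = 2
      · obtain ⟨rfl, rfl⟩ := c22
        norm_num [ha]
      · by_cases c23 : i = 2 ∧ j = 3
        · obtain ⟨rfl, rfl⟩ := c23
          norm_num [hb]
        · by_cases c32 : i = 3 ∧ j = 2
          · obtain ⟨rfl, rfl⟩ := c32
            norm_num [hd]
          · rw [hZ i j c00 c22 c23 c32,
              if_neg (by omega), if_neg (by omega), if_neg (by omega), if_neg (by omega)]
            norm_num
  have hp' : p = C c + C a * X 0 ^ 2 * X 1 ^ 2 + C b * X 0 ^ 2 * X 1 ^ 3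
      + C d * X 0 ^ 3 * X 1 ^ 2 := by
    rw [hp]
    simp only [monomial_eq, Finsupp.prod_pow, Fin.prod_univ_two, Finsupp.add_apply,
      Finsupp.single_apply]
    norm_num
    ring
  have e1 := ((hgrad (1/2) (by norm_num)).2.2).1
  have e2 := ((hgrad (1/2) (by norm_num)).2.2).2
  have e3 := ((hgrad (1/3) (by norm_num)).2.2).1
  rw [hp'] at e1 e2 e3
  simp only [map_add, pderiv_mul, pderiv_pow, pderiv_C, pderiv_X, map_mul, map_pow,
    eval_add, eval_mul, eval_pow, eval_C, eval_X] at e1 e2 e3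
  norm_num [Matrix.cons_val_zero, Matrix.cons_val_one] at e1 e2 e3
  have ha0 : a = 0 := by linarith
  have hb0' : b = 0 := by linarith
  have hd0 : d = 0 := by linarith
  have hpc : p = C c := by
    rw [hp', ha0, hb0', hd0]
    simp
  have hev : eval ![(0:ℝ), 0] p = c := by rw [hpc, eval_C]
  rw [hev, hpc]
  exact ⟨by rw [sub_self]; exact dvd_zero _, rfl⟩
end
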